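/- arXiv:2603.01956 — 6 statements merged into one kernel-verified Lean document; each statement's English description precedes it below -/
import Mathlib

section
/- The type B exponential generating function of the reduced characteristic polynomials χ̄_n^B(x) satisfies Σ_{n≥0} χ̄_n^B(x) t^n/(2^n n!) = ((1+t)^{(x-1)/2} − x)/(x − 1), as an identity of formal power series in t over ℚ(x) (using the binomial series for (1+t)^{(x-1)/2}). -/
open PowerSeries

lemma Xsub1_ne : (RatFunc.X - 1 : RatFunc ℚ) ≠ 0 := by
  have : (RatFunc.X : RatFunc ℚ) ≠ 1 := by
    intro h
    have := congrArg (RatFunc.eval (RingHom.id ℚ) 0) h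
    simp [RatFunc.eval_X, RatFunc.eval_one] at this
  exact sub_ne_zero.mpr this

/-- The type B exponential generating function of the reduced characteristic polynomials
`χ̄ₙᴮ(x)` of the type B braid arrangements satisfies
`∑_{n≥0} χ̄ₙᴮ(x) tⁿ/(2ⁿ n!) = ((1+t)^((x-1)/2) − x)/(x−1)` over `ℚ(x)`, where
`(1+t)^((x-1)/2)` is the formal binomial series `∑_{n≥0} C((x−1)/2, n) tⁿ`. -/
theorem typeB_egf_reduced_characteristic_polynomial
    (chibar : ℕ → RatFunc ℚ)
    (h0 : chibar 0 = -1)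
    (hn : ∀ n : ℕ, 1 ≤ n →
      chibar n = (∏ i ∈ Finset.range n,
        (RatFunc.X - ((2 * i + 1 : ℕ) : RatFunc ℚ))) / (RatFunc.X - 1)) :
    (PowerSeries.mk fun n : ℕ =>
        chibar n / ((2 ^ n * n.factorial : ℕ) : RatFunc ℚ)) =
      ((PowerSeries.mk fun n : ℕ =>
          (∏ i ∈ Finset.range n, ((RatFunc.X - 1) / 2 - (i : RatFunc ℚ))) /
            ((n.factorial : ℕ) : RatFunc ℚ))
        - PowerSeries.C (R := RatFunc ℚ) RatFunc.X) *
      (PowerSeries.C (R := RatFunc ℚ) (RatFunc.X - 1))⁻¹ := by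
  have inst : CharZero (RatFunc ℚ) := charZero_of_injective_algebraMap (algebraMap ℚ (RatFunc ℚ)).injective
  have hu : (RatFunc.X - 1 : RatFunc ℚ) ≠ 0 := Xsub1_ne
  have hcc : PowerSeries.constantCoeff (R := RatFunc ℚ)
      (PowerSeries.C (R := RatFunc ℚ) (RatFunc.X - 1)) ≠ 0 := by
    simpa using hu
  rw [PowerSeries.eq_mul_inv_iff_mul_eq hcc]
  ext n
  rw [PowerSeries.coeff_mul_C]
  rcases Nat.eq_zero_or_pos n with rfl | hpos
  · simp [h0]
  · simp only [map_sub, PowerSeries.coeff_mk]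
    rw [hn n hpos]
    rw [PowerSeries.coeff_C, if_neg hpos.ne']
    have key : (∏ i ∈ Finset.range n, ((RatFunc.X - 1) / 2 - (i : RatFunc ℚ)))
        = (∏ i ∈ Finset.range n, (RatFunc.X - ((2 * i + 1 : ℕ) : RatFunc ℚ))) / 2 ^ n := by
      rw [Finset.prod_congr rfl (fun (i : ℕ) _ => show (RatFunc.X - 1) / 2 - (i : RatFunc ℚ)
          = (RatFunc.X - ((2 * i + 1 : ℕ) : RatFunc ℚ)) / 2 by push_cast; field_simp; ring),
        Finset.prod_div_distrib, Finset.prod_const, Finset.card_range]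
    rw [key, sub_zero]
    have h2 : (2 : RatFunc ℚ) ≠ 0 := two_ne_zero
    have hf : ((n.factorial : ℕ) : RatFunc ℚ) ≠ 0 := by
      exact Nat.cast_ne_zero.mpr n.factorial_ne_zero
    push_cast
    field_simp
end

section
/- Manin's functional equation characterizes A: the formal power series A(t,x) = 1 + t + Σ_{n≥2} A_n(x) t^n/n! in ℚ[x][[t]], where A_n are defined by the recursion A_0 = A_1 = 1 and A_n = A_{n−1} + x Σ_{j=2}^{n−1} C(n−1, j) A_j A_{n−j}, is the unique solution in 1 + t + t²ℚ[x][[t]] of the differential equation A = (1 + x + xt − xA) ∂A/∂t. -/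
open PowerSeries Polynomial

private lemma coeff_dF (f : PowerSeries (Polynomial ℚ)) (n : ℕ) :
    PowerSeries.coeff n f.derivativeFun = PowerSeries.coeff (n + 1) f * (n + 1) :=
  PowerSeries.coeff_derivative f n

private lemma derivFun_sub (f g : PowerSeries (Polynomial ℚ)) :
    (f - g).derivativeFun = f.derivativeFun - g.derivativeFun := by
  ext n : 1
  simp [coeff_dF, sub_mul]

private lemma coeff_deriv_A (a : ℕ → Polynomial ℚ) (n : ℕ) :
    (PowerSeries.coeff n)
      (PowerSeries.mk fun n => ((n.factorial : ℚ)⁻¹ : ℚ) • a n).derivativeFun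
      = ((n.factorial : ℚ)⁻¹ : ℚ) • a (n + 1) := by
  rw [coeff_dF, PowerSeries.coeff_mk]
  have h : ((n : Polynomial ℚ) + 1) = Polynomial.C ((n : ℚ) + 1) := by
    rw [map_add, map_one, map_natCast]
  rw [h, mul_comm, ← Polynomial.smul_eq_C_mul, smul_smul]
  congr 1
  rw [Nat.factorial_succ]
  have h1 : ((n.factorial : ℚ)) ≠ 0 := Nat.cast_ne_zero.mpr n.factorial_ne_zero
  have h2 : ((n : ℚ) + 1) ≠ 0 := by positivity
  push_cast
  field_simp

private lemma sum_antidiag (a : ℕ → Polynomial ℚ) (n : ℕ) :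
    ∑ p ∈ Finset.HasAntidiagonal.antidiagonal n,
        (((p.1.factorial : ℚ)⁻¹ : ℚ) • a p.1) * (((p.2.factorial : ℚ)⁻¹ : ℚ) • a (p.2 + 1))
      = ((n.factorial : ℚ)⁻¹ : ℚ) •
        ∑ i ∈ Finset.range (n + 1), (n.choose i : Polynomial ℚ) * a i * a (n + 1 - i) := by
  rw [Finset.Nat.sum_antidiagonal_eq_sum_range_succ_mk, Finset.smul_sum]
  refine Finset.sum_congr rfl fun i hi => ?_
  have hin : i ≤ n := Nat.lt_succ_iff.mp (Finset.mem_range.mp hi)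
  have h1 : n - i + 1 = n + 1 - i := by omega
  simp only
  rw [h1, smul_mul_smul_comm, mul_assoc,
    show ((n.choose i : Polynomial ℚ)) = Polynomial.C ((n.choose i : ℚ)) from
      (map_natCast Polynomial.C _).symm,
    ← Polynomial.smul_eq_C_mul, smul_smul]
  congr 1
  have key := Nat.choose_mul_factorial_mul_factorial hin
  have h2 : ((i.factorial : ℚ)) ≠ 0 := Nat.cast_ne_zero.mpr i.factorial_ne_zero
  have h3 : (((n - i).factorial : ℚ)) ≠ 0 := Nat.cast_ne_zero.mpr (n - i).factorial_ne_zero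
  have h4 : ((n.factorial : ℚ)) ≠ 0 := Nat.cast_ne_zero.mpr n.factorial_ne_zero
  field_simp
  have key' : n.factorial = n.choose i * (i.factorial * (n - i).factorial) := by
    rw [← mul_assoc]; exact key.symm
  exact_mod_cast (by rw [← key]; ring : n.factorial = i.factorial * (n - i).factorial * n.choose i)

private lemma coeff_A_mul_dA (a : ℕ → Polynomial ℚ) (n : ℕ) :
    (PowerSeries.coeff n)
      ((PowerSeries.mk fun n => ((n.factorial : ℚ)⁻¹ : ℚ) • a n) *
        (PowerSeries.mk fun n => ((n.factorial : ℚ)⁻¹ : ℚ) • a n).derivativeFun)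
      = ((n.factorial : ℚ)⁻¹ : ℚ) •
        ∑ i ∈ Finset.range (n + 1), (n.choose i : Polynomial ℚ) * a i * a (n + 1 - i) := by
  rw [PowerSeries.coeff_mul, ← sum_antidiag]
  refine Finset.sum_congr rfl fun p hp => ?_
  rw [PowerSeries.coeff_mk, coeff_deriv_A]

/-- Manin's differential equation characterizes `A`: the series
`A(t,x) = ∑ Aₙ(x) tⁿ/n! ∈ ℚ[x][[t]]`, with `Aₙ` given by Keel's recursion, is the unique
solution in `1 + t + t²ℚ[x][[t]]` of `A = (1 + x + xt − xA) ∂A/∂t`. -/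
theorem manin_differential_equation_characterizes_A
    (a : ℕ → Polynomial ℚ) (ha0 : a 0 = 1) (ha1 : a 1 = 1)
    (ha : ∀ n : ℕ, 2 ≤ n → a n = a (n - 1) +
      Polynomial.X * ∑ j ∈ Finset.Icc 2 (n - 1), ((n - 1).choose j : Polynomial ℚ) * a j * a (n - j))
    (A : PowerSeries (Polynomial ℚ))
    (hA : A = PowerSeries.mk fun n => ((n.factorial : ℚ)⁻¹ : ℚ) • a n) :
    A = (1 + PowerSeries.C Polynomial.X + PowerSeries.C Polynomial.X * PowerSeries.X
          - PowerSeries.C Polynomial.X * A) * A.derivativeFun ∧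
    ∀ S : PowerSeries (Polynomial ℚ),
      PowerSeries.constantCoeff S = 1 →
      PowerSeries.coeff 1 S = 1 →
      S = (1 + PowerSeries.C Polynomial.X + PowerSeries.C Polynomial.X * PowerSeries.X
            - PowerSeries.C Polynomial.X * S) * S.derivativeFun →
      S = A := by
  have hcoeffA : ∀ n, PowerSeries.coeff n A = ((n.factorial : ℚ)⁻¹ : ℚ) • a n := by
    intro n; rw [hA, PowerSeries.coeff_mk]
  have hA0 : PowerSeries.constantCoeff A = 1 := by
    have := hcoeffA 0
    rw [PowerSeries.coeff_zero_eq_constantCoeff] at this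
    simp [this, ha0]
  have hA1 : PowerSeries.coeff 1 A = 1 := by
    simp [hcoeffA 1, ha1]
  have hexist : A = (1 + PowerSeries.C Polynomial.X
        + PowerSeries.C Polynomial.X * PowerSeries.X
        - PowerSeries.C Polynomial.X * A) * A.derivativeFun := by
    have hsplit : (1 + PowerSeries.C Polynomial.X
        + PowerSeries.C Polynomial.X * PowerSeries.X
        - PowerSeries.C Polynomial.X * A) * A.derivativeFun
        = A.derivativeFun + PowerSeries.C Polynomial.X * A.derivativeFun
          + PowerSeries.C Polynomial.X * (A.derivativeFun * PowerSeries.X)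
          - PowerSeries.C Polynomial.X * (A * A.derivativeFun) := by ring
    rw [hsplit]
    refine PowerSeries.ext fun n => ?_
    rw [map_sub, map_add, map_add, PowerSeries.coeff_C_mul, PowerSeries.coeff_C_mul,
      PowerSeries.coeff_C_mul, hcoeffA n, hA]
    rw [coeff_A_mul_dA, coeff_deriv_A]
    rcases n with _ | m
    · have hzero : (PowerSeries.coeff 0)
          ((PowerSeries.mk fun n => ((n.factorial : ℚ)⁻¹ : ℚ) • a n).derivativeFun
            * PowerSeries.X) = 0 := by
        rw [PowerSeries.coeff_zero_eq_constantCoeff, map_mul]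
        simp
      rw [hzero]
      simp [ha0, ha1]
    · -- n = m + 1
      have hXmul : (PowerSeries.coeff (m + 1))
          ((PowerSeries.mk fun n => ((n.factorial : ℚ)⁻¹ : ℚ) • a n).derivativeFun
            * PowerSeries.X) = ((m.factorial : ℚ)⁻¹ : ℚ) • a (m + 1) := by
        rw [PowerSeries.coeff_succ_mul_X, coeff_deriv_A]
      rw [hXmul]
      have e1 : ∑ i ∈ Finset.Ico 0 2, ((m + 1).choose i : Polynomial ℚ) * a i * a (m + 2 - i)
          = a (m + 2) + ((m + 1 : ℕ) : Polynomial ℚ) * a (m + 1) := by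
        rw [show Finset.Ico 0 2 = Finset.range 2 from rfl,
          Finset.sum_range_succ, Finset.sum_range_one]
        simp [ha0, ha1]
      have hsum : ∑ i ∈ Finset.range (m + 2),
            ((m + 1).choose i : Polynomial ℚ) * a i * a (m + 2 - i)
          = a (m + 2) + ((m + 1 : ℕ) : Polynomial ℚ) * a (m + 1)
            + ∑ i ∈ Finset.Icc 2 (m + 1),
              ((m + 1).choose i : Polynomial ℚ) * a i * a (m + 2 - i) := by
        rw [Finset.range_eq_Ico,
          ← Finset.sum_Ico_consecutive _ (by omega : 0 ≤ 2) (by omega : 2 ≤ m + 2),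
          e1, ← Finset.Ico_add_one_right_eq_Icc]; rfl
      have hrec2 : a (m + 2) = a (m + 1) + Polynomial.X *
          ∑ j ∈ Finset.Icc 2 (m + 1), ((m + 1).choose j : Polynomial ℚ) * a j * a (m + 2 - j) :=
        ha (m + 2) (by omega)
      have hrec' : a (m + 1) = a (m + 2) - Polynomial.X *
          ∑ j ∈ Finset.Icc 2 (m + 1), ((m + 1).choose j : Polynomial ℚ) * a j * a (m + 2 - j) := by
        rw [hrec2]; ring
      rw [hsum, hrec']
      have hc : ((m.factorial : ℚ)⁻¹ : ℚ) = ((m : ℚ) + 1) * (((m + 1).factorial : ℚ)⁻¹ : ℚ) := by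
        rw [Nat.factorial_succ]
        have h1 : ((m.factorial : ℚ)) ≠ 0 := Nat.cast_ne_zero.mpr m.factorial_ne_zero
        have h2 : ((m : ℚ) + 1) ≠ 0 := by positivity
        push_cast
        field_simp
      have hcast : (((m + 1 : ℕ)) : Polynomial ℚ) = Polynomial.C ((m : ℚ) + 1) := by
        rw [map_add, map_one, map_natCast]
        push_cast; ring
      rw [hc, hcast]
      simp only [Polynomial.smul_eq_C_mul, map_mul, map_add, map_one]
      ring
  refine ⟨hexist, ?_⟩
  intro S hS0 hS1 hSeq
  have hDeq : S - A = (1 + PowerSeries.C Polynomial.X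
        + PowerSeries.C Polynomial.X * PowerSeries.X
        - PowerSeries.C Polynomial.X * S) * (S - A).derivativeFun
      - PowerSeries.C Polynomial.X * ((S - A) * A.derivativeFun) := by
    rw [derivFun_sub]
    calc S - A
        = (1 + PowerSeries.C Polynomial.X
            + PowerSeries.C Polynomial.X * PowerSeries.X
            - PowerSeries.C Polynomial.X * S) * S.derivativeFun
          - (1 + PowerSeries.C Polynomial.X
            + PowerSeries.C Polynomial.X * PowerSeries.X
            - PowerSeries.C Polynomial.X * A) * A.derivativeFun := by
          rw [← hSeq, ← hexist]
      _ = _ := by ring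
  have hzero : ∀ n, PowerSeries.coeff n (S - A) = 0 := by
    intro n
    induction n using Nat.strong_induction_on with
    | _ n ih =>
      match n with
      | 0 =>
        simp [hS0, hA0]
      | 1 => rw [map_sub, hS1, hA1, sub_self]
      | (k + 2) =>
        have h := congrArg (PowerSeries.coeff (k + 1)) hDeq
        rw [ih (k + 1) (by omega)] at h
        rw [map_sub, PowerSeries.coeff_C_mul, PowerSeries.coeff_mul, PowerSeries.coeff_mul] at h
        have hterm2 : ∑ p ∈ Finset.HasAntidiagonal.antidiagonal (k + 1),
            PowerSeries.coeff p.1 (S - A)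
              * PowerSeries.coeff p.2 A.derivativeFun = 0 := by
          refine Finset.sum_eq_zero fun p hp => ?_
          have hp1 : p.1 ≤ k + 1 := by
            have := Finset.HasAntidiagonal.mem_antidiagonal.mp hp; omega
          rw [ih p.1 (by omega), zero_mul]
        have hterm1 : ∑ p ∈ Finset.HasAntidiagonal.antidiagonal (k + 1),
            PowerSeries.coeff p.1
              (1 + PowerSeries.C Polynomial.X
                + PowerSeries.C Polynomial.X * PowerSeries.X
                - PowerSeries.C Polynomial.X * S)
              * PowerSeries.coeff p.2 ((S - A).derivativeFun)
            = PowerSeries.coeff (k + 2) (S - A) * ((k + 1 : ℕ) + 1 : Polynomial ℚ) := by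
          rw [Finset.sum_eq_single_of_mem (0, k + 1)
            (Finset.HasAntidiagonal.mem_antidiagonal.mpr (by simp))]
          · have hB0 : PowerSeries.coeff 0
                (1 + PowerSeries.C Polynomial.X
                  + PowerSeries.C Polynomial.X * PowerSeries.X
                  - PowerSeries.C Polynomial.X * S) = 1 := by
              rw [PowerSeries.coeff_zero_eq_constantCoeff]
              rw [map_sub, map_add, map_add, map_one, map_mul, map_mul]
              simp [hS0]
            rw [hB0, one_mul, coeff_dF]
          · intro p hp hne
            have hps := Finset.HasAntidiagonal.mem_antidiagonal.mp hp
            have hp2 : p.2 + 1 < k + 2 := by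
              rcases Nat.eq_zero_or_pos p.1 with h0 | h0
              · exfalso; apply hne
                have : p.2 = k + 1 := by omega
                exact Prod.ext h0 this
              · omega
            rw [coeff_dF, ih (p.2 + 1) hp2, zero_mul, mul_zero]
        rw [hterm1, hterm2, mul_zero, sub_zero] at h
        have hne : ((k + 1 : ℕ) + 1 : Polynomial ℚ) ≠ 0 := by
          have hcast2 : ((k + 1 : ℕ) + 1 : Polynomial ℚ) = ((k + 2 : ℕ) : Polynomial ℚ) := by
            push_cast; ring
          rw [hcast2]
          exact Nat.cast_ne_zero.mpr (by omega)
        rcases mul_eq_zero.mp h.symm with h1 | h1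
        · exact h1
        · exact absurd h1 hne
  have : S - A = 0 := PowerSeries.ext fun n => by rw [hzero n, map_zero]
  exact sub_eq_zero.mp this
end

section
/- Quadratic equation relating B and A: define A(t,x) by Keel's recursion (A_0 = A_1 = 1, A_n = A_{n−1} + x Σ C(n−1,j) A_j A_{n−j}) and define B(t,x) = (1−x)/(A^{(x−1)/2} − x) as a formal power series in t over ℚ(x), where A^{(x−1)/2} = exp(((x−1)/2) log A) using formal exp/log (valid since A(0,x)=1). Then (1 + x + xt) B² − 2xAB + (x−1)A = 0. -/
open PowerSeries

noncomputable section

abbrev K : Type := RatFunc ℚ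

/-- `x`, the variable of the coefficient field `ℚ(x)`. -/
abbrev x : K := RatFunc.X

/-- Formal exponential `exp S = ∑ Sⁿ/n!` of a power series (intended for `S` with zero
constant term, in which case the coefficientwise formula below is the usual one). -/
def psExp (S : PowerSeries K) : PowerSeries K :=
  PowerSeries.mk fun m =>
    ∑ n ∈ Finset.range (m + 1), (n.factorial : K)⁻¹ * PowerSeries.coeff m (S ^ n)

/-- Formal logarithm `log P = ∑_{n≥1} (−1)^{n+1} (P−1)ⁿ/n` of a power series (intended for
`P` with constant term `1`). -/
def psLog (P : PowerSeries K) : PowerSeries K :=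
  PowerSeries.mk fun m =>
    ∑ n ∈ Finset.Icc 1 m, (-1 : K) ^ (n + 1) * (n : K)⁻¹ * PowerSeries.coeff m ((P - 1) ^ n)

/-- Formal power `P^a := exp(a · log P)` for `a ∈ ℚ(x)`, for `P` with constant term `1`. -/
def psPow (a : K) (P : PowerSeries K) : PowerSeries K :=
  psExp (PowerSeries.C a * psLog P)

end

instance : CharZero K := charZero_of_injective_algebraMap (algebraMap ℚ (RatFunc ℚ)).injective

lemma x_ne_one : (x : K) ≠ 1 := by
  intro h
  have h2 : (RatFunc.X : K).num = (1 : K).num := by exact_mod_cast congrArg RatFunc.num h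
  simp [RatFunc.num_X] at h2
  exact Polynomial.X_ne_C (1 : ℚ) (by simpa using h2)

lemma coeff_pow_eq_zero {S : PowerSeries K} (hS : constantCoeff S = 0) {m n : ℕ} (h : m < n) :
    coeff m (S ^ n) = 0 := by
  have hd : (X : K⟦X⟧) ^ n ∣ S ^ n := pow_dvd_pow_of_dvd (X_dvd_iff.mpr hS) n
  exact X_pow_dvd_iff.mp hd m h

lemma coeff_mul_congr {f g h : K⟦X⟧} {m : ℕ} (hgh : ∀ j ≤ m, coeff j g = coeff j h) :
    coeff m (f * g) = coeff m (f * h) := by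
  rw [coeff_mul, coeff_mul]
  refine Finset.sum_congr rfl fun p hp => ?_
  rw [Finset.HasAntidiagonal.mem_antidiagonal] at hp
  rw [hgh p.2 (by omega)]

lemma coeff_mul_eq_zero_left {g f : K⟦X⟧} {m : ℕ} (hg : ∀ j ≤ m, coeff j g = 0) :
    coeff m (g * f) = 0 := by
  rw [coeff_mul]
  refine Finset.sum_eq_zero fun p hp => ?_
  rw [Finset.HasAntidiagonal.mem_antidiagonal] at hp
  rw [hg p.1 (by omega), zero_mul]

lemma fact_inv_succ (k : ℕ) : ((k+1).factorial : K)⁻¹ * ((k : K) + 1) = (k.factorial : K)⁻¹ := by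
  have hk : ((k : K) + 1) ≠ 0 := Nat.cast_add_one_ne_zero k
  rw [Nat.factorial_succ]
  push_cast
  rw [mul_inv, mul_comm ((k:K)+1)⁻¹, mul_assoc, inv_mul_cancel₀ hk, mul_one]

lemma fact_inv_succ' (k : ℕ) :
    ((k+1).factorial : K)⁻¹ * (((k+1) : ℕ) : K) = (k.factorial : K)⁻¹ := by
  push_cast; exact fact_inv_succ k

lemma coeff_psExp_trunc {S : PowerSeries K} (hS : constantCoeff S = 0) {m N : ℕ} (h : m < N) :
    coeff m (psExp S) =
      coeff m (∑ n ∈ Finset.range N, C ((n.factorial : K)⁻¹) * S ^ n) := by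
  rw [psExp, coeff_mk, map_sum]
  simp only [coeff_C_mul]
  refine Finset.sum_subset (Finset.range_subset_range.mpr h) fun n hn hn' => ?_
  rw [coeff_pow_eq_zero hS (by simp at hn'; omega), mul_zero]

lemma constantCoeff_psExp (S : PowerSeries K) : constantCoeff (psExp S) = 1 := by
  rw [psExp, constantCoeff_mk]
  simp

lemma derivative_psExp {S : PowerSeries K} (hS : constantCoeff S = 0) :
    d⁄dX K (psExp S) = d⁄dX K S * psExp S := by
  ext m
  have hT : ∀ N : ℕ, d⁄dX K (∑ n ∈ Finset.range (N+1), C ((n.factorial : K)⁻¹) * S ^ n)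
      = d⁄dX K S * ∑ n ∈ Finset.range N, C ((n.factorial : K)⁻¹) * S ^ n := by
    intro N
    rw [map_sum, Finset.sum_range_succ', Finset.mul_sum]
    simp only [Derivation.leibniz, Derivation.leibniz_pow, derivative_C, smul_eq_mul,
      mul_zero, add_zero, zero_smul]
    refine Finset.sum_congr rfl fun k hk => ?_
    rw [Nat.add_sub_cancel, nsmul_eq_mul,
      show ((k+1 : ℕ) : K⟦X⟧) = C ((k+1 : ℕ) : K) from (map_natCast C (k+1)).symm,
      ← mul_assoc, ← map_mul, fact_inv_succ']
    ring
  rw [coeff_derivative, coeff_psExp_trunc hS (Nat.lt_succ_self (m+1)), ← coeff_derivative,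
    hT (m+1)]
  exact (coeff_mul_congr fun j hj => (coeff_psExp_trunc hS (by omega)).symm)

lemma constantCoeff_psLog (P : PowerSeries K) : constantCoeff (psLog P) = 0 := by
  rw [psLog, constantCoeff_mk]
  simp

lemma coeff_psLog_trunc {P : PowerSeries K} (hP : constantCoeff P = 1) {m N : ℕ} (h : m ≤ N) :
    coeff m (psLog P) =
      coeff m (∑ n ∈ Finset.Icc 1 N, C ((-1 : K) ^ (n+1) * (n : K)⁻¹) * (P - 1) ^ n) := by
  have hD : constantCoeff (P - 1) = 0 := by rw [map_sub, hP, map_one, sub_self]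
  rw [psLog, coeff_mk, map_sum]
  simp only [coeff_C_mul, mul_assoc]
  refine Finset.sum_subset (Finset.Icc_subset_Icc_right h) fun n hn hn' => ?_
  simp only [Finset.mem_Icc] at hn hn'
  rw [coeff_pow_eq_zero hD (by omega), mul_zero, mul_zero]

lemma derivative_psLog {P : PowerSeries K} (hP : constantCoeff P = 1) :
    P * d⁄dX K (psLog P) = d⁄dX K P := by
  have hD : constantCoeff (P - 1) = 0 := by rw [map_sub, hP, map_one, sub_self]
  have hT : ∀ N : ℕ, d⁄dX K (∑ n ∈ Finset.Icc 1 N, C ((-1 : K) ^ (n+1) * (n : K)⁻¹) * (P - 1) ^ n)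
      = (∑ k ∈ Finset.range N, (-(P - 1)) ^ k) * d⁄dX K P := by
    intro N
    rw [map_sum, ← Finset.Ico_add_one_right_eq_Icc, Finset.sum_Ico_eq_sum_range, Finset.sum_mul]
    refine Finset.sum_congr rfl fun k hk => ?_
    have hdD : d⁄dX K (P - 1) = d⁄dX K P := by
      rw [map_sub, Derivation.map_one_eq_zero, sub_zero]
    rw [Derivation.leibniz, Derivation.leibniz_pow, derivative_C]
    simp only [smul_zero, add_zero, smul_eq_mul, nsmul_eq_mul, Nat.add_sub_cancel,
      Nat.add_sub_cancel_left, hdD]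
    rw [show ((1 + k : ℕ) : K⟦X⟧) = C ((1 + k : ℕ) : K) from (map_natCast C (1+k)).symm,
      ← mul_assoc, ← map_mul]
    have hc : (-1 : K) ^ (1 + k + 1) * ((1 + k : ℕ) : K)⁻¹ * ((1 + k : ℕ) : K) = (-1 : K) ^ k := by
      have hne : ((1 + k : ℕ) : K) ≠ 0 := Nat.cast_ne_zero.mpr (by omega)
      rw [mul_assoc, inv_mul_cancel₀ hne, mul_one, pow_add, pow_add]
      ring
    rw [hc, show C ((-1 : K) ^ k) = (-1 : K⟦X⟧) ^ k by rw [map_pow, map_neg, map_one],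
      neg_pow, neg_pow]
    have hb : (-1 : K⟦X⟧) ^ k * (-1 + P) ^ k = (1 - P) ^ k := by
      rw [← mul_pow, show (-1 : K⟦X⟧) * (-1 + P) = 1 - P by ring]
    linear_combination (d⁄dX K P) * hb
  ext m
  have h1 : coeff m (P * d⁄dX K (psLog P))
      = coeff m (P * ((∑ k ∈ Finset.range (m+1), (-(P - 1)) ^ k) * d⁄dX K P)) := by
    refine coeff_mul_congr fun j hj => ?_
    rw [← hT (m+1), coeff_derivative, coeff_derivative,
      coeff_psLog_trunc hP (show j + 1 ≤ m + 1 by omega)]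
  have hgeom : P * (∑ k ∈ Finset.range (m+1), (-(P - 1)) ^ k) = 1 - (-(P - 1)) ^ (m+1) := by
    have hg := geom_sum_mul (-(P - 1)) (m+1)
    linear_combination -hg
  rw [h1, ← mul_assoc, hgeom, sub_mul, one_mul, map_sub]
  have hz : coeff m ((-(P - 1)) ^ (m+1) * d⁄dX K P) = 0 := by
    refine coeff_mul_eq_zero_left fun j hj => coeff_pow_eq_zero ?_ (by omega)
    rw [map_neg, hD, neg_zero]
  rw [hz, sub_zero]

lemma ode_unique {Aps W U : PowerSeries K} (h0 : constantCoeff Aps ≠ 0)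
    (heq : Aps * d⁄dX K U = W * U) (hU0 : constantCoeff U = 0) : U = 0 := by
  have key : ∀ n, coeff n U = 0 := by
    intro n
    induction n using Nat.strong_induction_on with
    | _ n IH =>
      match n with
      | 0 => rwa [coeff_zero_eq_constantCoeff]
      | Nat.succ n =>
        have h := congrArg (coeff n) heq
        rw [coeff_mul, coeff_mul] at h
        have hR : ∑ p ∈ Finset.HasAntidiagonal.antidiagonal n, coeff p.1 W * coeff p.2 U = 0 :=
          Finset.sum_eq_zero fun p hp => by
            rw [Finset.HasAntidiagonal.mem_antidiagonal] at hp
            rw [IH p.2 (by omega), mul_zero]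
        have hL : ∑ p ∈ Finset.HasAntidiagonal.antidiagonal n, coeff p.1 Aps * coeff p.2 (d⁄dX K U)
            = constantCoeff Aps * (coeff (n + 1) U * ((n : K) + 1)) := by
          rw [Finset.sum_eq_single_of_mem (0, n) (by simp)]
          · rw [coeff_derivative]
            push_cast
            rw [coeff_zero_eq_constantCoeff]
          · intro p hp hne
            rw [Finset.HasAntidiagonal.mem_antidiagonal] at hp
            have hp2 : p.2 < n := by
              rcases Nat.lt_or_ge p.2 n with h | h
              · exact h
              · exfalso; apply hne
                have h2 : p.2 = n := by omega
                have h1 : p.1 = 0 := by omega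
                ext <;> simp [h1, h2]
            rw [coeff_derivative, IH (p.2 + 1) (by omega), zero_mul, mul_zero]
        rw [hR, hL] at h
        rcases mul_eq_zero.mp h with h' | h'
        · exact absurd h' h0
        · rcases mul_eq_zero.mp h' with h'' | h''
          · exact h''
          · exact absurd h'' (Nat.cast_add_one_ne_zero n)
  ext n
  rw [key, map_zero]

lemma keel_ode (a : ℕ → K) (ha0 : a 0 = 1) (ha1 : a 1 = 1)
    (ha : ∀ n : ℕ, 2 ≤ n → a n = a (n - 1) +
      x * ∑ j ∈ Finset.Icc 2 (n - 1), ((n - 1).choose j : K) * a j * a (n - j))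
    (A : PowerSeries K) (hA : A = PowerSeries.mk fun n => (n.factorial : K)⁻¹ * a n) :
    (C (1 + x) + C x * X) * d⁄dX K A = A + C x * (A * d⁄dX K A) := by
  have hcA : ∀ j, coeff j A = (j.factorial : K)⁻¹ * a j := fun j => by rw [hA, coeff_mk]
  have hcdA : ∀ j, coeff j (d⁄dX K A) = (j.factorial : K)⁻¹ * a (j+1) := by
    intro j
    rw [coeff_derivative, hcA]
    linear_combination a (j+1) * fact_inv_succ j
  have hmul : ∀ m, coeff m (A * d⁄dX K A) =
      (m.factorial : K)⁻¹ * ∑ i ∈ Finset.range (m+1), (m.choose i : K) * a i * a (m + 1 - i) := by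
    intro m
    rw [coeff_mul, Finset.Nat.sum_antidiagonal_eq_sum_range_succ_mk, Finset.mul_sum]
    refine Finset.sum_congr rfl fun i hi => ?_
    rw [Finset.mem_range] at hi
    have hi' : i ≤ m := by omega
    rw [hcA, hcdA]
    have hch : ((m.choose i : ℕ) : K) * (i.factorial : K) * ((m-i).factorial : K)
        = (m.factorial : K) := by
      exact_mod_cast congrArg (Nat.cast : ℕ → K) (Nat.choose_mul_factorial_mul_factorial hi')
    have hfac : (i.factorial : K)⁻¹ * ((m - i).factorial : K)⁻¹
        = (m.factorial : K)⁻¹ * (m.choose i : K) := by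
      have hne1 : (i.factorial : K) ≠ 0 := Nat.cast_ne_zero.mpr i.factorial_ne_zero
      have hne2 : ((m-i).factorial : K) ≠ 0 := Nat.cast_ne_zero.mpr (m-i).factorial_ne_zero
      have hne3 : (m.factorial : K) ≠ 0 := Nat.cast_ne_zero.mpr m.factorial_ne_zero
      field_simp
      linear_combination -hch
    have hidx : m - i + 1 = m + 1 - i := by omega
    rw [hidx]
    linear_combination (a i * a (m + 1 - i)) * hfac
  ext m
  have hlhs : coeff m ((C (1 + x) + C x * X) * d⁄dX K A)
      = (1 + x) * coeff m (d⁄dX K A) + x * coeff m (X * d⁄dX K A) := by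
    rw [add_mul, map_add, coeff_C_mul, mul_assoc, coeff_C_mul]
  rw [hlhs, map_add, coeff_C_mul, hmul]
  match m with
  | 0 =>
    rw [coeff_zero_X_mul, hcdA, hcA]
    simp [ha0, ha1]
  | Nat.succ k =>
    rw [coeff_succ_X_mul, hcdA, hcdA, hcA]
    have hsplit : ∑ i ∈ Finset.range (k+1+1), ((k+1).choose i : K) * a i * a (k+1 + 1 - i)
        = a (k+2) + (((k+1) : ℕ) : K) * a (k+1)
          + ∑ i ∈ Finset.Icc 2 (k+1), ((k+1).choose i : K) * a i * a (k+2 - i) := by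
      rw [Finset.range_eq_Ico,
        ← Finset.sum_Ico_consecutive _ (show (0:ℕ) ≤ 2 by omega) (show 2 ≤ k+1+1 by omega)]
      have h02 : ∑ i ∈ Finset.Ico 0 2, ((k+1).choose i : K) * a i * a (k+1+1-i)
          = a (k+2) + (((k+1) : ℕ) : K) * a (k+1) := by
        rw [show Finset.Ico 0 2 = Finset.range 2 by rw [Finset.range_eq_Ico],
          Finset.sum_range_succ, Finset.sum_range_one]
        simp [ha0, ha1, Nat.choose_one_right]
      rw [h02, Finset.Ico_add_one_right_eq_Icc]
    rw [hsplit]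
    have hrec := ha (k+2) (by omega)
    simp only [show k+2-1 = k+1 from rfl] at hrec
    simp only [show k+1+1 = k+2 from rfl]
    linear_combination ((((k+1).factorial : ℕ) : K))⁻¹ * hrec
      + (x * a (k+1)) * (fact_inv_succ' k).symm

/-- Quadratic equation relating `B` and `A`:
`(1 + x + xt) B² − 2xAB + (x−1)A = 0`, where `A` is defined by Keel's recursion and
`B = (1−x)/(A^{(x−1)/2} − x)`. -/
theorem quadratic_relation_B_A
    (a : ℕ → K) (ha0 : a 0 = 1) (ha1 : a 1 = 1)
    (ha : ∀ n : ℕ, 2 ≤ n → a n = a (n - 1) +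
      x * ∑ j ∈ Finset.Icc 2 (n - 1), ((n - 1).choose j : K) * a j * a (n - j))
    (A : PowerSeries K) (hA : A = PowerSeries.mk fun n => (n.factorial : K)⁻¹ * a n)
    (B : PowerSeries K)
    (hB : B = PowerSeries.C (1 - x) * (psPow ((x - 1) / 2) A - PowerSeries.C x)⁻¹) :
    (PowerSeries.C (1 + x) + PowerSeries.C x * PowerSeries.X) * B ^ 2
      - 2 * PowerSeries.C x * A * B + PowerSeries.C (x - 1) * A = 0 := by
  have hA1 : constantCoeff A = 1 := by
    rw [hA, constantCoeff_mk]
    simp [ha0]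
  set P : K⟦X⟧ := psPow ((x - 1) / 2) A with hPdef
  have hPexp : P = psExp (C ((x-1)/2) * psLog A) := rfl
  have hS0 : constantCoeff (C ((x-1)/2) * psLog A) = 0 := by
    rw [map_mul, constantCoeff_psLog, mul_zero]
  have hP1 : constantCoeff P = 1 := by rw [hPexp]; exact constantCoeff_psExp _
  have hLd : A * d⁄dX K (psLog A) = d⁄dX K A := derivative_psLog hA1
  have hPd : d⁄dX K P = C ((x-1)/2) * d⁄dX K (psLog A) * P := by
    rw [hPexp, derivative_psExp hS0, Derivation.leibniz, derivative_C]
    simp only [smul_eq_mul, mul_zero, add_zero]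
  have hAPd : A * d⁄dX K P = C ((x-1)/2) * d⁄dX K A * P := by
    rw [hPd]
    linear_combination (C ((x-1)/2) * P) * hLd
  have hODE := keel_ode a ha0 ha1 ha A hA
  simp only [map_add, map_one] at hODE
  -- hODE : (1 + C x + C x * X) * dA = A + C x * (A * dA)
  have h2 : C ((x-1)/2) * 2 = C x - 1 := by
    rw [show (2 : K⟦X⟧) = C 2 from (map_ofNat _ 2).symm, ← map_mul,
      div_mul_cancel₀ _ (two_ne_zero), map_sub, map_one]
  set Φ : K⟦X⟧ := P * P * A with hPhi
  have hdPhi : d⁄dX K Φ = d⁄dX K P * P * A + P * d⁄dX K P * A + P * P * d⁄dX K A := by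
    rw [hPhi, Derivation.leibniz, Derivation.leibniz]
    simp only [smul_eq_mul]
    ring
  have hPhid : A * d⁄dX K Φ = C x * d⁄dX K A * Φ := by
    rw [hdPhi, hPhi]
    linear_combination (2 * A * P) * hAPd + (A * P * P * d⁄dX K A) * h2
  set cx : K⟦X⟧ := C x with hcx
  set U : K⟦X⟧ := (1 - cx) * (1 + cx) + (1 - cx) * cx * PowerSeries.X + cx^2 * A - Φ with hU
  have hU0 : constantCoeff U = 0 := by
    rw [hU, hPhi, hcx]
    simp only [map_sub, map_add, map_mul, map_pow, map_one, hA1, hP1, constantCoeff_X,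
      constantCoeff_C]
    ring
  have hdcx : d⁄dX K cx = 0 := by rw [hcx]; exact derivative_C
  have hdU : d⁄dX K U = (1 - cx) * cx + cx^2 * d⁄dX K A - d⁄dX K Φ := by
    rw [hU, map_sub, map_add, map_add]
    simp only [Derivation.leibniz, Derivation.leibniz_pow, smul_eq_mul, derivative_X,
      Derivation.map_one_eq_zero, map_sub, map_add, hdcx]
    ring
  have hUd : A * d⁄dX K U = (cx * d⁄dX K A) * U := by
    rw [hdU, hU]
    linear_combination (-1 : K⟦X⟧) * hPhid - (cx * (1 - cx)) * hODE
  have hUzero : U = 0 :=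
    ode_unique (Aps := A) (by rw [hA1]; exact one_ne_zero) hUd hU0
  have hManin : P * P * A = (1 - cx) * (1 + cx) + (1 - cx) * cx * PowerSeries.X + cx^2 * A := by
    rw [hU, hPhi] at hUzero
    linear_combination -hUzero
  have hQ0 : constantCoeff (P - C x) ≠ 0 := by
    rw [map_sub, hP1, constantCoeff_C]
    exact sub_ne_zero_of_ne (Ne.symm x_ne_one)
  have hQinv : (P - C x) * (P - C x)⁻¹ = 1 := PowerSeries.mul_inv_cancel _ hQ0
  have hkey : (C (1+x) + C x * PowerSeries.X) * ((1 - cx) * (1 - cx))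
      - 2 * cx * A * (1 - cx) * (P - cx) + (cx - 1) * A * ((P - cx) * (P - cx)) = 0 := by
    simp only [map_add, map_one, hcx]
    linear_combination (C x - 1) * hManin
  rw [hB]
  simp only [map_sub, map_one, hcx] at *
  linear_combination ((P - cx)⁻¹ * (P - cx)⁻¹) * hkey
    + (2 * cx * A * (1 - cx) * (P - cx)⁻¹ - (cx - 1) * A * (1 + (P - cx) * (P - cx)⁻¹)) * hQinv
end

section
/- Solving for A in terms of B: with A defined by Keel's recursion and B = (1−x)/(A^{(x−1)/2} − x), one has A = (1 + x + xt) B² / (1 − x + 2xB) in ℚ(x)[[t]]. -/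
open PowerSeries

noncomputable section Aux

open Finset

instance inst_s11 : CharZero K :=
  charZero_of_injective_algebraMap (algebraMap ℚ (RatFunc ℚ)).injective

local notation "D" => PowerSeries.derivative (R := K)
local notation "CC" => PowerSeries.C (R := K)
local notation "cf" => PowerSeries.coeff (R := K)

lemma coeff_pow_zero_of_lt {S : PowerSeries K} (hS : constantCoeff (R := K) S = 0)
    {m n : ℕ} (h : m < n) : cf m (S ^ n) = 0 := by
  have hd : (PowerSeries.X : PowerSeries K) ^ n ∣ S ^ n :=
    pow_dvd_pow_of_dvd (PowerSeries.X_dvd_iff.mpr hS) n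
  exact (PowerSeries.X_pow_dvd_iff.mp hd) m h

/-- partial sums of exp -/
def Epart (S : PowerSeries K) (N : ℕ) : PowerSeries K :=
  ∑ n ∈ range (N + 1), CC ((n.factorial : K)⁻¹) * S ^ n

lemma coeff_psExp {S : PowerSeries K} (hS : constantCoeff (R := K) S = 0) {m N : ℕ} (h : m ≤ N) :
    cf m (psExp S) = cf m (Epart S N) := by
  rw [psExp, PowerSeries.coeff_mk, Epart, map_sum]
  simp only [PowerSeries.coeff_C_mul]
  apply Finset.sum_subset
  · exact Finset.range_subset_range.mpr (by omega)
  · intro n hn hn'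
    rw [coeff_pow_zero_of_lt hS (by simp at hn'; omega), mul_zero]

lemma exp_deriv {S : PowerSeries K} (hS : constantCoeff (R := K) S = 0) :
    D (psExp S) = D S * psExp S := by
  ext m
  rw [PowerSeries.coeff_derivative, coeff_psExp hS (le_refl (m+1)),
    ← PowerSeries.coeff_derivative]
  have key : D (Epart S (m + 1)) = D S * Epart S m := by
    rw [Epart, Epart, map_sum, Finset.sum_range_succ', Finset.mul_sum]
    have h0 : D (CC ((Nat.factorial 0 : K)⁻¹) * S ^ 0) = 0 := by
      simp
    rw [h0, add_zero]
    refine Finset.sum_congr rfl fun n _ => ?_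
    rw [Derivation.leibniz, PowerSeries.derivative_C, smul_zero, add_zero,
      Derivation.leibniz_pow]
    simp only [smul_eq_mul, nsmul_eq_mul, Nat.succ_sub_one]
    have hfac : (CC ((Nat.factorial (n+1) : K)⁻¹)) * ((n : K⟦X⟧) + 1)
        = CC ((Nat.factorial n : K)⁻¹) := by
      rw [show ((n : K⟦X⟧) + 1) = CC ((n : K) + 1) by rw [map_add, map_natCast, map_one]]
      rw [← map_mul]
      congr 1
      have hne : ((n : K) + 1) ≠ 0 := Nat.cast_add_one_ne_zero n
      rw [Nat.factorial_succ]
      push_cast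
      rw [mul_inv, mul_comm ((n : K) + 1 : K)⁻¹ ((n.factorial : K))⁻¹, mul_assoc,
        inv_mul_cancel₀ hne, mul_one]
    push_cast
    calc CC ((Nat.factorial (n+1) : K)⁻¹) * (((n : K⟦X⟧) + 1) * (S ^ n * D S))
        = (CC ((Nat.factorial (n+1) : K)⁻¹) * ((n : K⟦X⟧) + 1)) * (S ^ n * D S) := by ring
      _ = D S * (CC ((Nat.factorial n : K)⁻¹) * S ^ n) := by rw [hfac]; ring
  rw [key, PowerSeries.coeff_mul, PowerSeries.coeff_mul]
  apply Finset.sum_congr rfl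
  intro p hp
  rw [Finset.HasAntidiagonal.mem_antidiagonal] at hp
  rw [← coeff_psExp hS (show p.2 ≤ m by omega)]

lemma log_deriv {P : PowerSeries K} (hP : constantCoeff (R := K) P = 1) :
    P * D (psLog P) = D P := by
  set Q : K⟦X⟧ := P - 1 with hQ
  have hQ0 : constantCoeff (R := K) Q = 0 := by rw [hQ, map_sub, hP, map_one, sub_self]
  have hnQ0 : constantCoeff (R := K) (-Q) = 0 := by rw [map_neg, hQ0, neg_zero]
  set L : ℕ → K⟦X⟧ :=
    fun N => ∑ n ∈ Icc 1 N, CC ((-1 : K) ^ (n + 1) * (n : K)⁻¹) * Q ^ n with hL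
  have hcoeff : ∀ m N, m ≤ N → cf m (psLog P) = cf m (L N) := by
    intro m N h
    rw [psLog, PowerSeries.coeff_mk, hL]
    simp only [map_sum, PowerSeries.coeff_C_mul]
    apply Finset.sum_subset (Finset.Icc_subset_Icc le_rfl h)
    intro n hn hn'
    rw [Finset.mem_Icc] at hn hn'
    rw [coeff_pow_zero_of_lt hQ0 (show m < n by omega), mul_zero]
  ext m
  have hDL : D (L (m+1)) = D Q * ∑ k ∈ Finset.range (m+1), (-Q) ^ k := by
    rw [hL, map_sum, Finset.mul_sum, show Finset.Icc 1 (m+1) = Finset.Ico 1 (m+2) from (Finset.Ico_add_one_right_eq_Icc 1 (m+1)).symm,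
      Finset.sum_Ico_eq_sum_range]
    rw [show m + 2 - 1 = m + 1 by omega]
    refine Finset.sum_congr rfl fun i _ => ?_
    rw [Derivation.leibniz, PowerSeries.derivative_C, smul_zero, add_zero,
      Derivation.leibniz_pow]
    simp only [smul_eq_mul, nsmul_eq_mul, Nat.add_sub_cancel_left]
    have hc : CC ((-1 : K) ^ ((1+i) + 1) * ((1+i : ℕ) : K)⁻¹) * ((1+i : ℕ) : K⟦X⟧)
        = CC ((-1 : K) ^ i) := by
      rw [show ((1+i : ℕ) : K⟦X⟧) = CC ((1+i : ℕ) : K) from (map_natCast _ _).symm,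
        ← map_mul]
      congr 1
      have hne : ((1+i : ℕ) : K) ≠ 0 := Nat.cast_ne_zero.mpr (by omega)
      rw [mul_assoc, inv_mul_cancel₀ hne, mul_one]
      have : (1 + i) + 1 = i + 2 := by omega
      rw [this, pow_add]
      norm_num
    calc CC ((-1 : K) ^ ((1+i) + 1) * ((1+i : ℕ) : K)⁻¹) * (((1+i : ℕ) : K⟦X⟧) * (Q ^ i * D Q))
        = (CC ((-1 : K) ^ ((1+i) + 1) * ((1+i : ℕ) : K)⁻¹) * ((1+i : ℕ) : K⟦X⟧))
            * (Q ^ i * D Q) := by ring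
      _ = D Q * (-Q) ^ i := by
            rw [hc, neg_pow Q i, map_pow, map_neg, map_one]; ring
  have hDQ : D Q = D P := by rw [hQ, map_sub, Derivation.map_one_eq_zero, sub_zero]
  have hgeom : P * D (L (m+1)) = D P - D P * (-Q) ^ (m+1) := by
    have hg := geom_sum_mul (-Q) (m+1)
    have hP1 : P = 1 + Q := by rw [hQ]; ring
    rw [hDL, ← hDQ, hP1]
    linear_combination (-(D Q)) * hg
  have step1 : cf m (P * D (psLog P)) = cf m (P * D (L (m+1))) := by
    rw [PowerSeries.coeff_mul, PowerSeries.coeff_mul]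
    refine Finset.sum_congr rfl fun p hp => ?_
    rw [Finset.HasAntidiagonal.mem_antidiagonal] at hp
    rw [PowerSeries.coeff_derivative, PowerSeries.coeff_derivative,
      hcoeff (p.2+1) (m+1) (by omega)]
  rw [step1, hgeom, map_sub]
  have hz : cf m (D P * (-Q) ^ (m+1)) = 0 := by
    rw [PowerSeries.coeff_mul]
    apply Finset.sum_eq_zero
    intro p hp
    rw [Finset.HasAntidiagonal.mem_antidiagonal] at hp
    rw [coeff_pow_zero_of_lt hnQ0 (show p.2 < m + 1 by omega), mul_zero]
  rw [hz, sub_zero]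

lemma constCoeff_psLog (P : PowerSeries K) : constantCoeff (R := K) (psLog P) = 0 := by
  rw [psLog, ← PowerSeries.coeff_zero_eq_constantCoeff_apply, PowerSeries.coeff_mk]
  simp

lemma constCoeff_psExp (S : PowerSeries K) : constantCoeff (R := K) (psExp S) = 1 := by
  rw [psExp, ← PowerSeries.coeff_zero_eq_constantCoeff_apply, PowerSeries.coeff_mk]
  simp

lemma pow_deriv {P : PowerSeries K} (hP : constantCoeff (R := K) P = 1) (c : K) :
    P * D (psPow c P) = CC c * D P * psPow c P := by
  have h0 : constantCoeff (R := K) (CC c * psLog P) = 0 := by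
    rw [map_mul, constCoeff_psLog, mul_zero]
  rw [psPow, exp_deriv h0, Derivation.leibniz, PowerSeries.derivative_C, smul_zero,
    add_zero, smul_eq_mul, ← log_deriv hP]
  ring

lemma ode_unique_s11 {P u G H : PowerSeries K} (hP : constantCoeff (R := K) P = 1)
    (hG : P * D G = u * G) (hH : P * D H = u * H)
    (h0 : cf 0 G = cf 0 H) : G = H := by
  ext n
  induction n using Nat.strong_induction_on with
  | _ n ih =>
    match n with
    | 0 => exact h0
    | (n + 1) =>
      have e1 := congrArg (cf n) hG
      have e2 := congrArg (cf n) hH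
      rw [PowerSeries.coeff_mul, PowerSeries.coeff_mul,
        Finset.Nat.sum_antidiagonal_eq_sum_range_succ_mk, Finset.sum_range_succ'] at e1 e2
      have hR : ∑ p ∈ antidiagonal n, cf p.1 u * cf p.2 G
          = ∑ p ∈ antidiagonal n, cf p.1 u * cf p.2 H := by
        refine Finset.sum_congr rfl fun p hp => ?_
        rw [Finset.HasAntidiagonal.mem_antidiagonal] at hp
        rw [ih p.2 (by omega)]
      have hL : ∀ i ∈ range n,
          cf (i+1) P * cf (n - (i+1)) (D G) = cf (i+1) P * cf (n - (i+1)) (D H) := by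
        intro i hi
        rw [Finset.mem_range] at hi
        rw [PowerSeries.coeff_derivative, PowerSeries.coeff_derivative,
          ih (n - (i+1) + 1) (by omega)]
      rw [Finset.sum_congr rfl hL, hR] at e1
      have e3 := add_left_cancel (e1.trans e2.symm)
      rw [PowerSeries.coeff_zero_eq_constantCoeff_apply, hP, one_mul, one_mul, Nat.sub_zero,
        PowerSeries.coeff_derivative, PowerSeries.coeff_derivative] at e3
      exact mul_right_cancel₀ (by exact_mod_cast Nat.cast_add_one_ne_zero (R := K) n) e3

lemma ode_of_rec (a : ℕ → K) (ha0 : a 0 = 1) (ha1 : a 1 = 1)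
    (ha : ∀ n : ℕ, 2 ≤ n → a n = a (n - 1) +
      x * ∑ j ∈ Finset.Icc 2 (n - 1), ((n - 1).choose j : K) * a j * a (n - j))
    (A : PowerSeries K) (hA : A = PowerSeries.mk fun n => (n.factorial : K)⁻¹ * a n) :
    (CC (1 + x) + CC x * PowerSeries.X) * D A = A + CC x * (A * D A) := by
  have hcA : ∀ n, cf n A = (n.factorial : K)⁻¹ * a n := by
    intro n; rw [hA, PowerSeries.coeff_mk]
  have hcD : ∀ n, cf n (D A) = ((n.factorial : K))⁻¹ * a (n+1) := by
    intro n
    rw [PowerSeries.coeff_derivative, hcA, Nat.factorial_succ]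
    have hne1 : ((n:K)+1) ≠ 0 := Nat.cast_add_one_ne_zero n
    have hnf : ((n.factorial : K)) ≠ 0 := Nat.cast_ne_zero.mpr n.factorial_ne_zero
    push_cast
    field_simp
  ext n
  rw [add_mul, (PowerSeries.coeff (R := K) n).map_add, PowerSeries.coeff_C_mul, mul_assoc,
    PowerSeries.coeff_C_mul, (PowerSeries.coeff (R := K) n).map_add, PowerSeries.coeff_C_mul]
  match n with
  | 0 =>
    rw [PowerSeries.coeff_zero_X_mul, hcD, hcA]
    rw [show cf 0 (A * D A) = cf 0 A * cf 0 (D A) by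
      simp [PowerSeries.coeff_zero_eq_constantCoeff, map_mul]]
    rw [hcA, hcD]
    simp [ha0, ha1]
  | (n+1) =>
    rw [PowerSeries.coeff_succ_X_mul, hcD, hcD, hcA]
    have haN := ha (n+2) (by omega)
    rw [show n+2-1 = n+1 from rfl] at haN
    have haN' : a (n+2) = a (n+1)
        + x * ∑ j ∈ Finset.Icc 2 (n+1), ((n+1).choose j : K) * a j * a (n+2-j) := haN
    have hterm : ∀ i ≤ n+1, cf i A * cf (n+1-i) (D A)
        = ((n+1).factorial : K)⁻¹ * (((n+1).choose i : K) * (a i * a (n+2-i))) := by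
      intro i hi
      rw [hcA, hcD, show n+1-i+1 = n+2-i by omega]
      have key : ((i.factorial : K))⁻¹ * (((n+1-i).factorial : K))⁻¹
          = ((n+1).factorial : K)⁻¹ * ((n+1).choose i : K) := by
        have h2 := Nat.choose_mul_factorial_mul_factorial hi
        have h2' : (((n+1).choose i : K)) * (i.factorial : K) * ((n+1-i).factorial : K)
            = ((n+1).factorial : K) := by exact_mod_cast congrArg (Nat.cast (R := K)) h2
        have f1 : ((i.factorial : K)) ≠ 0 := Nat.cast_ne_zero.mpr i.factorial_ne_zero
        have f2 : (((n+1-i).factorial : K)) ≠ 0 :=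
          Nat.cast_ne_zero.mpr (n+1-i).factorial_ne_zero
        have f3 : (((n+1).factorial : K)) ≠ 0 :=
          Nat.cast_ne_zero.mpr (n+1).factorial_ne_zero
        field_simp
        linear_combination -h2'
      calc (i.factorial : K)⁻¹ * a i * (((n+1-i).factorial : K)⁻¹ * a (n+2-i))
          = ((i.factorial : K))⁻¹ * (((n+1-i).factorial : K))⁻¹ * (a i * a (n+2-i)) := by
            ring
        _ = ((n+1).factorial : K)⁻¹ * (((n+1).choose i : K) * (a i * a (n+2-i))) := by
            rw [key]; ring
    have hsum : cf (n+1) (A * D A)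
        = ((n+1).factorial : K)⁻¹ * (a (n+2) + ((n:K)+1) * a (n+1)
            + ∑ j ∈ Finset.Icc 2 (n+1), ((n+1).choose j : K) * a j * a (n+2-j)) := by
      rw [PowerSeries.coeff_mul, Finset.Nat.sum_antidiagonal_eq_sum_range_succ_mk]
      rw [Finset.sum_congr rfl (fun i hi => hterm i (by
        rw [Finset.mem_range] at hi; omega))]
      rw [Finset.sum_range_succ', Finset.sum_range_succ']
      rw [show Finset.Icc 2 (n+1) = Finset.Ico 2 (n+2) from (Finset.Ico_add_one_right_eq_Icc 2 (n+1)).symm,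
        Finset.sum_Ico_eq_sum_range, show n+2-2 = n from rfl]
      have e0 : ((n+1).factorial : K)⁻¹ * (((n+1).choose 0 : K) * (a 0 * a (n+2-0)))
          = ((n+1).factorial : K)⁻¹ * a (n+2) := by
        rw [Nat.choose_zero_right, Nat.sub_zero, ha0]
        push_cast
        ring
      have e1 : ((n+1).factorial : K)⁻¹ * (((n+1).choose (0+1) : K) * (a (0+1) * a (n+2-(0+1))))
          = ((n+1).factorial : K)⁻¹ * (((n:K)+1) * a (n+1)) := by
        simp only [show (0:ℕ)+1 = 1 from rfl]
        rw [Nat.choose_one_right, ha1, show n+2-1 = n+1 from rfl]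
        push_cast
        ring
      rw [e0, e1]
      have hs : ∑ k ∈ Finset.range n,
          ((n+1).factorial : K)⁻¹ * (((n+1).choose (k+1+1) : K) * (a (k+1+1) * a (n+2-(k+1+1))))
          = ((n+1).factorial : K)⁻¹ * ∑ k ∈ Finset.range n,
            ((n+1).choose (2+k) : K) * a (2+k) * a (n+2-(2+k)) := by
        rw [Finset.mul_sum]
        refine Finset.sum_congr rfl fun k _ => ?_
        rw [show k+1+1 = 2+k by omega]
        ring
      rw [hs]
      ring
    rw [hsum]
    have hfac : ((n.factorial : K))⁻¹ = ((n+1).factorial : K)⁻¹ * ((n:K)+1) := by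
      rw [Nat.factorial_succ]
      have hne1 : ((n:K)+1) ≠ 0 := Nat.cast_add_one_ne_zero n
      have hnf : ((n.factorial : K)) ≠ 0 := Nat.cast_ne_zero.mpr n.factorial_ne_zero
      push_cast
      field_simp
    rw [hfac]
    linear_combination (((n+1).factorial : K)⁻¹) * haN'

lemma one_sub_x_ne : (1 : K) - x ≠ 0 := by
  have h : x = algebraMap (Polynomial ℚ) (RatFunc ℚ) Polynomial.X := rfl
  intro hc
  rw [sub_eq_zero] at hc
  have h2 : algebraMap (Polynomial ℚ) (RatFunc ℚ) 1
      = algebraMap (Polynomial ℚ) (RatFunc ℚ) Polynomial.X := by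
    rw [map_one, ← h, hc]
  have := RatFunc.algebraMap_injective ℚ h2
  simpa using congrArg (Polynomial.eval 0) this.symm

lemma one_add_x_ne : (1 : K) + x ≠ 0 := by
  have h : x = algebraMap (Polynomial ℚ) (RatFunc ℚ) Polynomial.X := rfl
  intro hc
  have h2 : algebraMap (Polynomial ℚ) (RatFunc ℚ) (1 + Polynomial.X)
      = algebraMap (Polynomial ℚ) (RatFunc ℚ) 0 := by
    rw [map_add, map_one, ← h, map_zero, hc]
  have := RatFunc.algebraMap_injective ℚ h2
  simpa using congrArg (Polynomial.eval 1) this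

end Aux

/-- Solving for `A` in terms of `B`: `A = (1 + x + xt) B^2 / (1 - x + 2xB)`. -/
theorem A_in_terms_of_B
    (a : ℕ → K) (ha0 : a 0 = 1) (ha1 : a 1 = 1)
    (ha : ∀ n : ℕ, 2 ≤ n → a n = a (n - 1) +
      x * ∑ j ∈ Finset.Icc 2 (n - 1), ((n - 1).choose j : K) * a j * a (n - j))
    (A : PowerSeries K) (hA : A = PowerSeries.mk fun n => (n.factorial : K)⁻¹ * a n)
    (B : PowerSeries K)
    (hB : B = PowerSeries.C (1 - x) * (psPow ((x - 1) / 2) A - PowerSeries.C x)⁻¹) :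
    A = (PowerSeries.C (1 + x) + PowerSeries.C x * PowerSeries.X) * B ^ 2 *
      (PowerSeries.C (1 - x) + 2 * PowerSeries.C x * B)⁻¹ := by
  have hA0 : PowerSeries.constantCoeff (R := K) A = 1 := by
    rw [hA, ← PowerSeries.coeff_zero_eq_constantCoeff_apply, PowerSeries.coeff_mk]
    simp [ha0]
  set Cp : PowerSeries K := psPow ((x - 1) / 2) A with hCp
  have hC0 : PowerSeries.constantCoeff (R := K) Cp = 1 := constCoeff_psExp _
  have hCd : A * (d⁄dX K) Cp = PowerSeries.C (R := K) ((x-1)/2) * (d⁄dX K) A * Cp :=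
    pow_deriv hA0 _
  have hODE' : (1 + PowerSeries.C (R := K) x + PowerSeries.C (R := K) x * PowerSeries.X) * (d⁄dX K) A
      = A + PowerSeries.C (R := K) x * (A * (d⁄dX K) A) := by
    have h := ode_of_rec a ha0 ha1 ha A hA
    rw [map_add, map_one] at h
    exact h
  have hc2 : (2 : PowerSeries K) * PowerSeries.C (R := K) ((x-1)/2) + 1 = PowerSeries.C (R := K) x := by
    rw [← map_ofNat (PowerSeries.C (R := K)) 2, ← map_one (PowerSeries.C (R := K)), ← map_mul, ← map_add]
    congr 1
    field_simp
    ring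
  set y : PowerSeries K := PowerSeries.C (R := K) x with hy
  set H : PowerSeries K := y * y * A + 1 - y * y + (y - y * y) * PowerSeries.X with hH
  have hdH : (d⁄dX K) H = y * y * (d⁄dX K) A + (y - y * y) := by
    rw [hH]
    rw [map_add, map_sub, map_add]
    simp only [hy, Derivation.leibniz, smul_eq_mul, PowerSeries.derivative_C,
      Derivation.map_one_eq_zero, PowerSeries.derivative_X, map_sub,
      mul_zero, zero_add, add_zero, mul_one, zero_mul, zero_sub, mul_neg, neg_zero]
    ring
  have hG : A * (d⁄dX K) (Cp * Cp * A) = (y * (d⁄dX K) A) * (Cp * Cp * A) := by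
    rw [Derivation.leibniz (a := Cp * Cp) (b := A), Derivation.leibniz (a := Cp) (b := Cp)]
    simp only [smul_eq_mul]
    linear_combination (2 * Cp * A) * hCd + (Cp * Cp * A * ((d⁄dX K) A)) * hc2
  have hHeq : A * (d⁄dX K) H = (y * (d⁄dX K) A) * H := by
    rw [hdH, hH]
    linear_combination (-(y - y * y)) * hODE'
  have h00 : PowerSeries.coeff (R := K) 0 (Cp * Cp * A) = PowerSeries.coeff (R := K) 0 H := by
    rw [PowerSeries.coeff_zero_eq_constantCoeff_apply,
      PowerSeries.coeff_zero_eq_constantCoeff_apply, hH]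
    simp only [map_add, map_sub, map_mul, map_one, hA0, hC0, hy,
      PowerSeries.constantCoeff_C, PowerSeries.constantCoeff_X, mul_zero, mul_one]
    ring
  have hManin : Cp * Cp * A = H := ode_unique_s11 hA0 hG hHeq h00
  -- final algebra
  have hW0 : PowerSeries.constantCoeff (R := K) (Cp - y) = 1 - x := by
    rw [map_sub, hC0, hy, PowerSeries.constantCoeff_C]
  have hWne : (Cp - y) ≠ 0 := by
    intro h
    rw [h, map_zero] at hW0
    exact one_sub_x_ne hW0.symm
  have hBW : B * (Cp - y) = 1 - y := by
    rw [hB, hy, mul_assoc, PowerSeries.inv_mul_cancel _ (by rw [hW0]; exact one_sub_x_ne),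
      mul_one, map_sub, map_one]
  have hB0 : PowerSeries.constantCoeff (R := K) B = 1 := by
    rw [hB, map_mul, PowerSeries.constantCoeff_C, PowerSeries.constantCoeff_inv, hW0,
      mul_inv_cancel₀ one_sub_x_ne]
  have hU0 : PowerSeries.constantCoeff (R := K)
      (PowerSeries.C (R := K) (1 - x) + 2 * PowerSeries.C (R := K) x * B) ≠ 0 := by
    rw [map_add, map_mul, map_mul, PowerSeries.constantCoeff_C, PowerSeries.constantCoeff_C,
      hB0, mul_one, map_ofNat]
    rw [show (1 - x) + 2 * x = 1 + x by ring]
    exact one_add_x_ne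
  rw [PowerSeries.eq_mul_inv_iff_mul_eq hU0]
  refine mul_right_cancel₀ (pow_ne_zero 2 hWne) ?_
  have hC1px : PowerSeries.C (R := K) (1 + x) = 1 + y := by rw [map_add, map_one, hy]
  have hC1mx : PowerSeries.C (R := K) (1 - x) = 1 - y := by rw [map_sub, map_one, hy]
  rw [hC1px, hC1mx]
  linear_combination (2 * y * A * (Cp - y)
      - (1 + y + y * PowerSeries.X) * (B * (Cp - y) + (1 - y))) * hBW + (1 - y) * hManin
end

section
/- Gamma-positivity of B_n: for each n ≥ 1, B_n(x) is a palindromic polynomial of degree n−1 (B_n(x) = x^{n−1} B_n(1/x)) and is gamma-positive: writing B_n(x) = Σ_{i=0}^{⌊(n−1)/2⌋} γ_i x^i (1+x)^{n−1−2i}, all coefficients γ_i are nonnegative. -/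
open Polynomial Finset

noncomputable def gsum (d : ℕ) (γ : ℕ → ℚ) : Polynomial ℚ :=
  ∑ i ∈ Finset.range (d / 2 + 1), C (γ i) * X ^ i * (1 + X) ^ (d - 2 * i)

def IsGamma (d : ℕ) (p : Polynomial ℚ) : Prop :=
  ∃ γ : ℕ → ℚ, (∀ i, 0 ≤ γ i) ∧ p = gsum d γ

lemma isGamma_zero (d : ℕ) : IsGamma d 0 :=
  ⟨0, fun _ => le_rfl, by simp [gsum]⟩

lemma isGamma_add {d : ℕ} {p q : Polynomial ℚ} (hp : IsGamma d p) (hq : IsGamma d q) :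
    IsGamma d (p + q) := by
  obtain ⟨γ, hγ, rfl⟩ := hp
  obtain ⟨δ, hδ, rfl⟩ := hq
  exact ⟨γ + δ, fun i => add_nonneg (hγ i) (hδ i), by
    rw [gsum, gsum, gsum, ← Finset.sum_add_distrib]
    exact Finset.sum_congr rfl fun i _ => by simp only [Pi.add_apply, C_add]; ring⟩

lemma isGamma_smul {d : ℕ} {p : Polynomial ℚ} {c : ℚ} (hc : 0 ≤ c) (hp : IsGamma d p) :
    IsGamma d (C c * p) := by
  obtain ⟨γ, hγ, rfl⟩ := hp
  exact ⟨fun i => c * γ i, fun i => mul_nonneg hc (hγ i), by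
    rw [gsum, gsum, Finset.mul_sum]
    exact Finset.sum_congr rfl fun i _ => by simp only [C_mul]; ring⟩

lemma isGamma_sum {d : ℕ} {ι : Type*} (s : Finset ι) (f : ι → Polynomial ℚ)
    (h : ∀ i ∈ s, IsGamma d (f i)) : IsGamma d (∑ i ∈ s, f i) := by
  classical
  induction s using Finset.induction_on with
  | empty => simpa using isGamma_zero d
  | insert _ _ hx ih =>
    rw [Finset.sum_insert hx]
    exact isGamma_add (h _ (Finset.mem_insert_self _ _))
      (ih fun i hi => h i (Finset.mem_insert_of_mem hi))

lemma isGamma_one : IsGamma 0 1 :=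
  ⟨fun _ => 1, fun _ => zero_le_one, by simp [gsum]⟩

lemma isGamma_mul {d₁ d₂ : ℕ} {p q : Polynomial ℚ} (hp : IsGamma d₁ p) (hq : IsGamma d₂ q) :
    IsGamma (d₁ + d₂) (p * q) := by
  obtain ⟨γ, hγ, rfl⟩ := hp
  obtain ⟨δ, hδ, rfl⟩ := hq
  refine ⟨fun k => ∑ ij ∈ (Finset.range (d₁/2+1)) ×ˢ (Finset.range (d₂/2+1)),
      if ij.1 + ij.2 = k then γ ij.1 * δ ij.2 else 0, fun k => ?_, ?_⟩
  · exact Finset.sum_nonneg fun ij _ => by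
      split <;> [exact mul_nonneg (hγ _) (hδ _); exact le_rfl]
  · rw [gsum, gsum, gsum, Finset.sum_mul_sum]
    have key : ∀ i ∈ Finset.range (d₁/2+1), ∀ j ∈ Finset.range (d₂/2+1),
        (C (γ i) * X ^ i * (1+X) ^ (d₁ - 2*i)) * (C (δ j) * X ^ j * (1+X) ^ (d₂ - 2*j))
        = C (γ i * δ j) * X ^ (i+j) * (1+X) ^ ((d₁+d₂) - 2*(i+j)) := by
      intro i hi j hj
      simp only [Finset.mem_range] at hi hj
      rw [show (d₁+d₂) - 2*(i+j) = (d₁ - 2*i) + (d₂ - 2*j) by omega, pow_add, C_mul, pow_add]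
      ring
    rw [Finset.sum_congr rfl fun i hi => Finset.sum_congr rfl fun j hj => key i hi j hj]
    rw [eq_comm]
    calc ∑ k ∈ Finset.range ((d₁+d₂)/2+1),
          C (∑ ij ∈ (Finset.range (d₁/2+1)) ×ˢ (Finset.range (d₂/2+1)),
             if ij.1 + ij.2 = k then γ ij.1 * δ ij.2 else 0) * X ^ k * (1+X) ^ ((d₁+d₂) - 2*k)
        = ∑ k ∈ Finset.range ((d₁+d₂)/2+1),
          ∑ ij ∈ (Finset.range (d₁/2+1)) ×ˢ (Finset.range (d₂/2+1)),
            (if ij.1 + ij.2 = k then C (γ ij.1 * δ ij.2) * X ^ k * (1+X) ^ ((d₁+d₂) - 2*k) else 0) := by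
          refine Finset.sum_congr rfl fun k _ => ?_
          rw [map_sum, Finset.sum_mul, Finset.sum_mul]
          refine Finset.sum_congr rfl fun ij _ => ?_
          split <;> simp
      _ = ∑ ij ∈ (Finset.range (d₁/2+1)) ×ˢ (Finset.range (d₂/2+1)),
          ∑ k ∈ Finset.range ((d₁+d₂)/2+1),
            (if ij.1 + ij.2 = k then C (γ ij.1 * δ ij.2) * X ^ k * (1+X) ^ ((d₁+d₂) - 2*k) else 0) :=
          Finset.sum_comm
      _ = ∑ ij ∈ (Finset.range (d₁/2+1)) ×ˢ (Finset.range (d₂/2+1)),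
            C (γ ij.1 * δ ij.2) * X ^ (ij.1+ij.2) * (1+X) ^ ((d₁+d₂) - 2*(ij.1+ij.2)) := by
          refine Finset.sum_congr rfl fun ij hij => ?_
          simp only [Finset.mem_product, Finset.mem_range] at hij
          rw [Finset.sum_ite_eq (Finset.range ((d₁+d₂)/2+1)) (ij.1+ij.2)
            (fun k => C (γ ij.1 * δ ij.2) * X ^ k * (1+X) ^ ((d₁+d₂) - 2*k))]
          rw [if_pos (Finset.mem_range.mpr (by omega))]
      _ = ∑ i ∈ Finset.range (d₁/2+1), ∑ j ∈ Finset.range (d₂/2+1),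
            C (γ i * δ j) * X ^ (i+j) * (1+X) ^ ((d₁+d₂) - 2*(i+j)) := Finset.sum_product _ _ _

lemma isGamma_X : IsGamma 2 (X : Polynomial ℚ) := by
  refine ⟨fun i => if i = 1 then 1 else 0, fun i => by dsimp only; split <;> norm_num, ?_⟩
  simp [gsum, Finset.sum_range_succ]

lemma isGamma_one_add_X : IsGamma 1 ((1 : Polynomial ℚ) + X) := by
  refine ⟨fun _ => 1, fun _ => zero_le_one, ?_⟩
  simp [gsum]

lemma coeff_term (c : ℚ) (i m k : ℕ) :
    (C c * X ^ i * (1 + X) ^ m).coeff k = if i ≤ k then c * (m.choose (k - i)) else 0 := by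
  rw [show C c * X ^ i * (1+X) ^ m = (C c * (1+X) ^ m) * X ^ i by ring,
    Polynomial.coeff_mul_X_pow', Polynomial.coeff_C_mul, add_comm (1 : Polynomial ℚ) X,
    Polynomial.coeff_X_add_one_pow]

lemma gsum_natDegree_le (d : ℕ) (γ : ℕ → ℚ) : (gsum d γ).natDegree ≤ d := by
  refine Polynomial.natDegree_sum_le_of_forall_le _ _ fun i hi => ?_
  simp only [Finset.mem_range] at hi
  calc (C (γ i) * X ^ i * (1+X) ^ (d - 2*i)).natDegree
      ≤ (C (γ i) * X ^ i).natDegree + ((1+X : Polynomial ℚ) ^ (d - 2*i)).natDegree :=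
        Polynomial.natDegree_mul_le
    _ ≤ (i + (d - 2*i) * 1) := by
        gcongr
        · calc (C (γ i) * X ^ i).natDegree ≤ (C (γ i)).natDegree + (X ^ i : Polynomial ℚ).natDegree :=
            Polynomial.natDegree_mul_le
          _ ≤ i := by simp
        · calc ((1+X : Polynomial ℚ) ^ (d - 2*i)).natDegree ≤ (d - 2*i) * (1+X : Polynomial ℚ).natDegree :=
            Polynomial.natDegree_pow_le
          _ ≤ (d - 2*i) * 1 := by
              gcongr
              rw [add_comm]
              exact le_of_eq (Polynomial.natDegree_X_add_C 1)
    _ ≤ d := by omega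

lemma gsum_coeff_zero (d : ℕ) (γ : ℕ → ℚ) : (gsum d γ).coeff 0 = γ 0 := by
  rw [gsum, Polynomial.finset_sum_coeff]
  rw [Finset.sum_eq_single 0]
  · rw [coeff_term]; simp
  · intro i _ hi
    rw [coeff_term, if_neg (by omega)]
  · intro h; exact absurd (Finset.mem_range.mpr (by omega)) h

lemma gsum_coeff_top (d : ℕ) (γ : ℕ → ℚ) : (gsum d γ).coeff d = γ 0 := by
  rw [gsum, Polynomial.finset_sum_coeff]
  rw [Finset.sum_eq_single 0]
  · rw [coeff_term]; simp [Nat.choose_self]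
  · intro i hi hi0
    simp only [Finset.mem_range] at hi
    rw [coeff_term, if_pos (by omega), Nat.choose_eq_zero_of_lt (by omega), Nat.cast_zero, mul_zero]
  · intro h; exact absurd (Finset.mem_range.mpr (by omega)) h

lemma gsum_coeff_symm (d : ℕ) (γ : ℕ → ℚ) (k : ℕ) (hk : k ≤ d) :
    (gsum d γ).coeff k = (gsum d γ).coeff (d - k) := by
  rw [gsum, Polynomial.finset_sum_coeff, Polynomial.finset_sum_coeff]
  refine Finset.sum_congr rfl fun i hi => ?_
  simp only [Finset.mem_range] at hi
  have h2i : 2 * i ≤ d := by omega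
  rw [coeff_term, coeff_term]
  by_cases h1 : i ≤ k <;> by_cases h2 : i ≤ d - k
  · rw [if_pos h1, if_pos h2]
    have hle : k - i ≤ d - 2*i := by omega
    rw [show d - k - i = (d - 2*i) - (k - i) by omega, Nat.choose_symm hle]
  · rw [if_pos h1, if_neg h2, Nat.choose_eq_zero_of_lt (by omega), Nat.cast_zero, mul_zero]
  · rw [if_neg h1, if_pos h2, Nat.choose_eq_zero_of_lt (by omega), Nat.cast_zero, mul_zero]
  · rw [if_neg h1, if_neg h2]

lemma isGamma_X_mul {d : ℕ} {p : Polynomial ℚ} (hp : IsGamma d p) : IsGamma (d + 2) (X * p) := by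
  have := isGamma_mul isGamma_X hp
  rwa [add_comm 2 d] at this

lemma isGamma_one_add_X_mul {d : ℕ} {p : Polynomial ℚ} (hp : IsGamma d p) :
    IsGamma (d + 1) ((1 + X) * p) := by
  have := isGamma_mul isGamma_one_add_X hp
  rwa [add_comm 1 d] at this

lemma A_gamma (a : ℕ → Polynomial ℚ) (ha0 : a 0 = 1) (ha1 : a 1 = 1)
    (ha : ∀ n : ℕ, 2 ≤ n → a n = a (n - 1) + Polynomial.X *
      ∑ j ∈ Finset.Icc 2 (n - 1), ((n - 1).choose j : Polynomial ℚ) * a j * a (n - j)) :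
    ∀ n : ℕ, 2 ≤ n → IsGamma (n - 2) (a n) := by
  intro n
  induction n using Nat.strong_induction_on with
  | _ n ih =>
    intro hn
    rcases eq_or_lt_of_le hn with h2 | h3
    · -- n = 2
      rw [← h2]
      have : a 2 = 1 := by
        rw [ha 2 le_rfl]
        simp [ha1, show Finset.Icc 2 1 = (∅ : Finset ℕ) from rfl]
      rw [this]
      exact isGamma_one
    · -- n ≥ 3
      have hn3 : 3 ≤ n := h3
      have hsplit : a n = (1 + X) * a (n - 1) +
          X * ∑ j ∈ Finset.Icc 2 (n - 2), ((n - 1).choose j : Polynomial ℚ) * a j * a (n - j) := by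
        rw [ha n hn, show n - 1 = (n - 2) + 1 by omega,
          Finset.sum_Icc_succ_top (by omega : 2 ≤ (n - 2) + 1)]
        rw [show (n - 2) + 1 = n - 1 by omega, show n - (n - 1) = 1 by omega,
          Nat.choose_self, ha1, Nat.cast_one]
        ring
      rw [hsplit]
      have h1 : IsGamma (n - 2) ((1 + X) * a (n - 1)) := by
        have := isGamma_one_add_X_mul (ih (n - 1) (by omega) (by omega))
        rwa [show (n - 1 - 2) + 1 = n - 2 by omega] at this
      refine isGamma_add h1 ?_
      rcases Nat.lt_or_ge n 4 with h4 | h4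
      · -- n = 3 : empty sum
        have : Finset.Icc 2 (n - 2) = (∅ : Finset ℕ) := by
          apply Finset.Icc_eq_empty; omega
        rw [this, Finset.sum_empty, mul_zero]
        exact isGamma_zero _
      · have hsum : IsGamma (n - 4)
            (∑ j ∈ Finset.Icc 2 (n - 2), ((n - 1).choose j : Polynomial ℚ) * a j * a (n - j)) := by
          refine isGamma_sum _ _ fun j hj => ?_
          simp only [Finset.mem_Icc] at hj
          have hterm : ((n - 1).choose j : Polynomial ℚ) * a j * a (n - j)
              = C (((n - 1).choose j : ℚ)) * (a j * a (n - j)) := by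
            rw [Polynomial.C_eq_natCast, mul_assoc]
          rw [hterm]
          refine isGamma_smul (by positivity) ?_
          have h1 := ih j (by omega) (by omega)
          have h2 := ih (n - j) (by omega) (by omega)
          have := isGamma_mul h1 h2
          rwa [show (j - 2) + (n - j - 2) = n - 4 by omega] at this
        have := isGamma_X_mul hsum
        rwa [show (n - 4) + 2 = n - 2 by omega] at this

lemma B_gamma (a b : ℕ → Polynomial ℚ) (ha0 : a 0 = 1) (ha1 : a 1 = 1)
    (ha : ∀ n : ℕ, 2 ≤ n → a n = a (n - 1) + Polynomial.X *
      ∑ j ∈ Finset.Icc 2 (n - 1), ((n - 1).choose j : Polynomial ℚ) * a j * a (n - j))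
    (hb0 : b 0 = 1)
    (hb : ∀ n : ℕ, b (n + 1) = b n +
      Polynomial.X * (∑ j ∈ Finset.Icc 1 n, (n.choose j : Polynomial ℚ) * b j * b (n - j)) +
      Polynomial.X * (∑ j ∈ Finset.Icc 2 n,
        (n.choose j : Polynomial ℚ) * 2 ^ j * a j * b (n + 1 - j))) :
    ∀ n : ℕ, 1 ≤ n → IsGamma (n - 1) (b n) := by
  intro n
  induction n using Nat.strong_induction_on with
  | _ n ih =>
    intro hn
    rcases eq_or_lt_of_le hn with h1 | h2
    · -- n = 1
      rw [← h1]
      have : b 1 = 1 := by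
        rw [hb 0]
        simp [hb0, show Finset.Icc 1 0 = (∅ : Finset ℕ) from rfl,
          show Finset.Icc 2 0 = (∅ : Finset ℕ) from rfl]
      rw [this]
      exact isGamma_one
    · -- n ≥ 2, write n = m + 1 with m ≥ 1
      obtain ⟨m, rfl⟩ : ∃ m, n = m + 1 := ⟨n - 1, by omega⟩
      have hm : 1 ≤ m := by omega
      have hsplit : b (m + 1) = (1 + X) * b m +
          X * (∑ j ∈ Finset.Icc 1 (m - 1), (m.choose j : Polynomial ℚ) * b j * b (m - j)) +
          X * (∑ j ∈ Finset.Icc 2 m,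
            (m.choose j : Polynomial ℚ) * 2 ^ j * a j * b (m + 1 - j)) := by
        rw [hb m, show m = (m - 1) + 1 by omega]
        rw [Finset.sum_Icc_succ_top (by omega : 1 ≤ (m - 1) + 1)]
        rw [show (m - 1) + 1 = m by omega, Nat.sub_self, hb0, Nat.choose_self, Nat.cast_one]
        ring
      rw [hsplit, show m + 1 - 1 = m by omega]
      have hbm : IsGamma m ((1 + X) * b m) := by
        have := isGamma_one_add_X_mul (ih m (by omega) hm)
        rwa [show (m - 1) + 1 = m by omega] at this
      refine isGamma_add (isGamma_add hbm ?_) ?_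
      · -- first sum
        rcases eq_or_lt_of_le hm with hm1 | hm2
        · rw [← hm1]; simp [show Finset.Icc 1 0 = (∅ : Finset ℕ) from rfl]
          exact isGamma_zero _
        · have hsum : IsGamma (m - 2)
              (∑ j ∈ Finset.Icc 1 (m - 1), (m.choose j : Polynomial ℚ) * b j * b (m - j)) := by
            refine isGamma_sum _ _ fun j hj => ?_
            simp only [Finset.mem_Icc] at hj
            rw [show (m.choose j : Polynomial ℚ) * b j * b (m - j)
                = C ((m.choose j : ℚ)) * (b j * b (m - j)) by
              rw [Polynomial.C_eq_natCast, mul_assoc]]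
            refine isGamma_smul (by positivity) ?_
            have h1 := ih j (by omega) (by omega)
            have h2 := ih (m - j) (by omega) (by omega)
            have := isGamma_mul h1 h2
            rwa [show (j - 1) + (m - j - 1) = m - 2 by omega] at this
          have := isGamma_X_mul hsum
          rwa [show (m - 2) + 2 = m by omega] at this
      · -- second sum
        rcases eq_or_lt_of_le hm with hm1 | hm2
        · rw [← hm1]; simp [show Finset.Icc 2 1 = (∅ : Finset ℕ) from rfl]
          exact isGamma_zero _
        · have hsum : IsGamma (m - 2)
              (∑ j ∈ Finset.Icc 2 m,
                (m.choose j : Polynomial ℚ) * 2 ^ j * a j * b (m + 1 - j)) := by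
            refine isGamma_sum _ _ fun j hj => ?_
            simp only [Finset.mem_Icc] at hj
            rw [show (m.choose j : Polynomial ℚ) * 2 ^ j * a j * b (m + 1 - j)
                = C ((m.choose j : ℚ) * 2 ^ j) * (a j * b (m + 1 - j)) by
              rw [map_mul, map_pow, Polynomial.C_eq_natCast]
              simp only [map_ofNat]
              ring]
            refine isGamma_smul (by positivity) ?_
            have h1 := A_gamma a ha0 ha1 ha j hj.1
            have h2 := ih (m + 1 - j) (by omega) (by omega)
            have := isGamma_mul h1 h2
            rwa [show (j - 2) + (m + 1 - j - 1) = m - 2 by omega] at this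
          have := isGamma_X_mul hsum
          rwa [show (m - 2) + 2 = m by omega] at this

lemma B_coeff_zero (b : ℕ → Polynomial ℚ) (a : ℕ → Polynomial ℚ)
    (hb0 : b 0 = 1)
    (hb : ∀ n : ℕ, b (n + 1) = b n +
      Polynomial.X * (∑ j ∈ Finset.Icc 1 n, (n.choose j : Polynomial ℚ) * b j * b (n - j)) +
      Polynomial.X * (∑ j ∈ Finset.Icc 2 n,
        (n.choose j : Polynomial ℚ) * 2 ^ j * a j * b (n + 1 - j))) :
    ∀ n : ℕ, (b n).coeff 0 = 1 := by
  intro n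
  induction n with
  | zero => simp [hb0]
  | succ n ih =>
    rw [hb n]
    simp [Polynomial.mul_coeff_zero, Polynomial.coeff_X_zero, ih]

/-- Gamma-positivity of B_n: for each n >= 1, B_n is palindromic of degree n-1 and
gamma-positive, i.e. B_n = sum_i gamma_i x^i (1+x)^(n-1-2i) with all gamma_i >= 0. -/
theorem gamma_positivity_of_B
    (a b : ℕ → Polynomial ℚ) (ha0 : a 0 = 1) (ha1 : a 1 = 1)
    (ha : ∀ n : ℕ, 2 ≤ n → a n = a (n - 1) + Polynomial.X *
      ∑ j ∈ Finset.Icc 2 (n - 1), ((n - 1).choose j : Polynomial ℚ) * a j * a (n - j))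
    (hb0 : b 0 = 1)
    (hb : ∀ n : ℕ, b (n + 1) = b n +
      Polynomial.X * (∑ j ∈ Finset.Icc 1 n, (n.choose j : Polynomial ℚ) * b j * b (n - j)) +
      Polynomial.X * (∑ j ∈ Finset.Icc 2 n,
        (n.choose j : Polynomial ℚ) * 2 ^ j * a j * b (n + 1 - j))) :
    ∀ n : ℕ, 1 ≤ n →
      (b n).natDegree = n - 1 ∧
      (∀ i : ℕ, i ≤ n - 1 → (b n).coeff i = (b n).coeff (n - 1 - i)) ∧
      ∃ γ : ℕ → ℚ, (∀ i, 0 ≤ γ i) ∧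
        b n = ∑ i ∈ Finset.range ((n - 1) / 2 + 1),
          Polynomial.C (γ i) * Polynomial.X ^ i * (1 + Polynomial.X) ^ (n - 1 - 2 * i) := by
  intro n hn
  obtain ⟨γ, hγ, hbn⟩ := B_gamma a b ha0 ha1 ha hb0 hb n hn
  have hc0 : (b n).coeff 0 = 1 := B_coeff_zero b a hb0 hb n
  have hγ0 : γ 0 = 1 := by rw [hbn, gsum_coeff_zero] at hc0; exact hc0
  have htop : (b n).coeff (n - 1) = 1 := by rw [hbn, gsum_coeff_top, hγ0]
  refine ⟨?_, ?_, γ, hγ, hbn⟩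
  · refine le_antisymm ?_ ?_
    · rw [hbn]; exact gsum_natDegree_le _ _
    · exact Polynomial.le_natDegree_of_ne_zero (by rw [htop]; norm_num)
  · intro i hi
    rw [hbn]
    exact gsum_coeff_symm (n - 1) γ i hi
end

section
/- Specialization at x = 1: the total Betti numbers satisfy B(t,1) = A(t,1)/(1 + t/2), equivalently, for all n ≥ 1: A_n(1) = (1/2^n)(B_n(1) + n B_{n−1}(1)), i.e., B_n(1) = 2^n A_n(1) − n B_{n−1}(1). -/
private lemma sum_Icc_two_top {M : Type*} [AddCommMonoid M] (m : ℕ) (f : ℕ → M)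
    (h : f (m + 1) = 0) :
    ∑ j ∈ Finset.Icc 2 (m + 1), f j = ∑ j ∈ Finset.Icc 2 m, f j := by
  rcases m with _ | m
  · rw [Finset.Icc_eq_empty (by omega), Finset.Icc_eq_empty (by omega)]
  · rw [Finset.sum_Icc_succ_top (by omega), h, add_zero]

private lemma coefN1 (m j : ℕ) (hj : j ≤ m + 1) :
    (m + 1).choose j * (m + 2 - j) = (m + 1) * m.choose j + (m + 1).choose j := by
  have h := Nat.choose_mul_succ_eq m j
  have h2 : m + 2 - j = (m + 1 - j) + 1 := by omega
  rw [h2, Nat.mul_succ, ← h]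
  ring

private lemma coefN2 (m j : ℕ) (hj1 : 1 ≤ j) (hj : j ≤ m + 1) :
    (m + 1).choose j * (m + 2 - j) * j
      = (m + 1) * (j * m.choose j) + (m + 1) * m.choose (j - 1) := by
  obtain ⟨i, rfl⟩ : ∃ i, j = i + 1 := ⟨j - 1, by omega⟩
  have h2 : (m + 1).choose (i + 1) * (i + 1) = (m + 1) * m.choose i :=
    (Nat.add_one_mul_choose_eq m i).symm
  rw [coefN1 m (i + 1) hj]
  simp only [Nat.add_sub_cancel]
  calc ((m + 1) * m.choose (i + 1) + (m + 1).choose (i + 1)) * (i + 1)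
      = (m + 1) * ((i + 1) * m.choose (i + 1)) + (m + 1).choose (i + 1) * (i + 1) := by ring
    _ = _ := by rw [h2]

private lemma key_rat (F G : ℕ → ℚ) (hF1 : F 1 = 1)
    (hF : ∀ n : ℕ, 2 ≤ n → F n = F (n - 1) +
      ∑ j ∈ Finset.Icc 2 (n - 1), ((n - 1).choose j : ℚ) * F j * F (n - j))
    (hG0 : G 0 = 1)
    (hG : ∀ n : ℕ, G (n + 1) = G n +
      (∑ j ∈ Finset.Icc 1 n, (n.choose j : ℚ) * G j * G (n - j)) +
      ∑ j ∈ Finset.Icc 2 n, (n.choose j : ℚ) * 2 ^ j * F j * G (n + 1 - j)) :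
    ∀ n : ℕ, 1 ≤ n → G n + n * G (n - 1) = 2 ^ n * F n := by
  have hG1 : G 1 = 1 := by
    have h := hG 0
    rw [Finset.Icc_eq_empty (by omega), Finset.Icc_eq_empty (by omega)] at h
    simpa [hG0] using h
  intro n
  induction n using Nat.strong_induction_on with
  | _ n IH =>
  intro hn
  obtain _ | n := n
  · omega
  obtain _ | m := n
  · norm_num [hG1, hG0, hF1]
  -- step: n = m + 2
  have IH' : ∀ k, k < m + 2 → 1 ≤ k → 2 ^ k * F k = G k + (k : ℚ) * G (k - 1) :=
    fun k h1 h2 => (IH k h1 h2).symm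
  have hA' : F (m + 2) = F (m + 1) +
      ∑ j ∈ Finset.Icc 2 (m + 1), ((m + 1).choose j : ℚ) * F j * F (m + 2 - j) :=
    hF (m + 2) (by omega)
  have hB1' : G (m + 2) = G (m + 1) +
      (∑ j ∈ Finset.Icc 1 (m + 1), ((m + 1).choose j : ℚ) * G j * G (m + 1 - j)) +
      ∑ j ∈ Finset.Icc 2 (m + 1), ((m + 1).choose j : ℚ) * 2 ^ j * F j * G (m + 2 - j) :=
    hG (m + 1)
  have hE1 : G (m + 2) = G (m + 1) +
      (∑ j ∈ Finset.Icc 1 (m + 1), ((m + 1).choose j : ℚ) * G j * G (m + 1 - j)) +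
      ∑ j ∈ Finset.Icc 2 (m + 1),
        ((m + 1).choose j : ℚ) * ((G j + (j : ℚ) * G (j - 1)) * G (m + 2 - j)) := by
    rw [hB1']
    congr 1
    refine Finset.sum_congr rfl fun j hj => ?_
    rw [Finset.mem_Icc] at hj
    have e1 : 2 ^ j * F j = G j + (j : ℚ) * G (j - 1) := IH' j (by omega) (by omega)
    calc ((m + 1).choose j : ℚ) * 2 ^ j * F j * G (m + 2 - j)
        = ((m + 1).choose j : ℚ) * ((2 ^ j * F j) * G (m + 2 - j)) := by ring
      _ = _ := by rw [e1]
  have hE2 : 2 ^ (m + 2) * F (m + 2)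
      = 2 * (G (m + 1) + ((m : ℚ) + 1) * G m) +
        ∑ j ∈ Finset.Icc 2 (m + 1), ((m + 1).choose j : ℚ) *
          ((G j + (j : ℚ) * G (j - 1)) *
            (G (m + 2 - j) + ((m + 2 - j : ℕ) : ℚ) * G (m + 1 - j))) := by
    rw [hA', mul_add, Finset.mul_sum]
    congr 1
    · have e : 2 ^ (m + 1) * F (m + 1) = G (m + 1) + ((m : ℚ) + 1) * G m := by
        have h := IH' (m + 1) (by omega) (by omega)
        push_cast at h
        simpa using h
      calc (2 : ℚ) ^ (m + 2) * F (m + 1) = 2 * (2 ^ (m + 1) * F (m + 1)) := by ring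
        _ = _ := by rw [e]
    · refine Finset.sum_congr rfl fun j hj => ?_
      rw [Finset.mem_Icc] at hj
      have e1 : 2 ^ j * F j = G j + (j : ℚ) * G (j - 1) := IH' j (by omega) (by omega)
      have e2 := IH' (m + 2 - j) (by omega) (by omega)
      rw [show m + 2 - j - 1 = m + 1 - j from by omega] at e2
      have e4 : (2 : ℚ) ^ (m + 2) = 2 ^ j * 2 ^ (m + 2 - j) := by
        rw [← pow_add]
        congr 1
        omega
      calc (2 : ℚ) ^ (m + 2) * (((m + 1).choose j : ℚ) * F j * F (m + 2 - j))
          = ((m + 1).choose j : ℚ) * ((2 ^ j * F j) * (2 ^ (m + 2 - j) * F (m + 2 - j))) := by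
            rw [e4]; ring
        _ = _ := by rw [e1, e2]
  have hE0 : G (m + 1) = G m +
      (∑ j ∈ Finset.Icc 1 m, (m.choose j : ℚ) * G j * G (m - j)) +
      ∑ j ∈ Finset.Icc 2 m,
        (m.choose j : ℚ) * ((G j + (j : ℚ) * G (j - 1)) * G (m + 1 - j)) := by
    rw [hG m]
    congr 1
    refine Finset.sum_congr rfl fun j hj => ?_
    rw [Finset.mem_Icc] at hj
    have e1 : 2 ^ j * F j = G j + (j : ℚ) * G (j - 1) := IH' j (by omega) (by omega)
    calc (m.choose j : ℚ) * 2 ^ j * F j * G (m + 1 - j)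
        = (m.choose j : ℚ) * ((2 ^ j * F j) * G (m + 1 - j)) := by ring
      _ = _ := by rw [e1]
  have hS1 : (∑ j ∈ Finset.Icc 1 (m + 1), ((m + 1).choose j : ℚ) * G j * G (m + 1 - j))
      = ((m : ℚ) + 1) * G m +
        ∑ j ∈ Finset.Icc 2 (m + 1), ((m + 1).choose j : ℚ) * G j * G (m + 1 - j) := by
    have hins : Finset.Icc 1 (m + 1) = insert 1 (Finset.Icc 2 (m + 1)) := by
      ext x
      simp only [Finset.mem_Icc, Finset.mem_insert]
      omega
    rw [hins, Finset.sum_insert (by simp)]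
    congr 1
    simp [hG1, Nat.choose_one_right]
  have hTD : (∑ j ∈ Finset.Icc 2 (m + 1), ((m + 1).choose j : ℚ) *
        ((G j + (j : ℚ) * G (j - 1)) *
          (G (m + 2 - j) + ((m + 2 - j : ℕ) : ℚ) * G (m + 1 - j))))
      = (∑ j ∈ Finset.Icc 2 (m + 1),
          ((m + 1).choose j : ℚ) * ((G j + (j : ℚ) * G (j - 1)) * G (m + 2 - j))) +
        ∑ j ∈ Finset.Icc 2 (m + 1), ((m + 1).choose j : ℚ) * ((m + 2 - j : ℕ) : ℚ) *
          ((G j + (j : ℚ) * G (j - 1)) * G (m + 1 - j)) := by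
    rw [← Finset.sum_add_distrib]
    exact Finset.sum_congr rfl fun j _ => by ring
  have hDsplit : (∑ j ∈ Finset.Icc 2 (m + 1), ((m + 1).choose j : ℚ) * ((m + 2 - j : ℕ) : ℚ) *
        ((G j + (j : ℚ) * G (j - 1)) * G (m + 1 - j)))
      = ((m : ℚ) + 1) * (∑ j ∈ Finset.Icc 2 (m + 1),
          (m.choose j : ℚ) * ((G j + (j : ℚ) * G (j - 1)) * G (m + 1 - j))) +
        (∑ j ∈ Finset.Icc 2 (m + 1), ((m + 1).choose j : ℚ) * G j * G (m + 1 - j)) +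
        ((m : ℚ) + 1) * ∑ j ∈ Finset.Icc 2 (m + 1),
          (m.choose (j - 1) : ℚ) * G (j - 1) * G (m + 1 - j) := by
    rw [Finset.mul_sum, Finset.mul_sum, ← Finset.sum_add_distrib, ← Finset.sum_add_distrib]
    refine Finset.sum_congr rfl fun j hj => ?_
    rw [Finset.mem_Icc] at hj
    have n1 : ((m + 1).choose j : ℚ) * ((m + 2 - j : ℕ) : ℚ)
        = ((m : ℚ) + 1) * (m.choose j : ℚ) + ((m + 1).choose j : ℚ) := by
      exact_mod_cast congrArg (Nat.cast : ℕ → ℚ) (coefN1 m j (by omega))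
    have n2 : ((m + 1).choose j : ℚ) * ((m + 2 - j : ℕ) : ℚ) * (j : ℚ)
        = ((m : ℚ) + 1) * ((j : ℚ) * (m.choose j : ℚ))
          + ((m : ℚ) + 1) * (m.choose (j - 1) : ℚ) := by
      exact_mod_cast congrArg (Nat.cast : ℕ → ℚ) (coefN2 m j (by omega) (by omega))
    linear_combination (G j * G (m + 1 - j)) * n1 + (G (j - 1) * G (m + 1 - j)) * n2
  have hQ : (∑ j ∈ Finset.Icc 2 (m + 1),
        (m.choose j : ℚ) * ((G j + (j : ℚ) * G (j - 1)) * G (m + 1 - j)))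
      = ∑ j ∈ Finset.Icc 2 m,
        (m.choose j : ℚ) * ((G j + (j : ℚ) * G (j - 1)) * G (m + 1 - j)) := by
    apply sum_Icc_two_top
    simp [Nat.choose_succ_self]
  have hmap : Finset.Icc 2 (m + 1)
      = Finset.map ⟨fun i => i + 1, add_left_injective 1⟩ (Finset.Icc 1 m) := by
    ext x
    simp only [Finset.mem_Icc, Finset.mem_map, Function.Embedding.coeFn_mk]
    constructor
    · intro h
      exact ⟨x - 1, by omega, by omega⟩
    · rintro ⟨i, hi, rfl⟩
      omega
  have hP : (∑ j ∈ Finset.Icc 2 (m + 1), (m.choose (j - 1) : ℚ) * G (j - 1) * G (m + 1 - j))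
      = ∑ j ∈ Finset.Icc 1 m, (m.choose j : ℚ) * G j * G (m - j) := by
    rw [hmap, Finset.sum_map]
    refine Finset.sum_congr rfl fun i hi => ?_
    simp only [Function.Embedding.coeFn_mk, Nat.add_sub_cancel]
    rw [show m + 1 - (i + 1) = m - i from by omega]
  rw [hQ, hP] at hDsplit
  show G (m + 2) + ((m + 2 : ℕ) : ℚ) * G (m + 1) = 2 ^ (m + 2) * F (m + 2)
  push_cast
  linear_combination hE1 - hE2 + hS1 - hTD - hDsplit + ((m : ℚ) + 1) * hE0

/-- Specialization at x = 1: the total Betti numbers satisfy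
B_n(1) = 2^n A_n(1) - n B_(n-1)(1) for all n >= 1. -/
theorem specialization_at_one
    (a b : ℕ → Polynomial ℚ) (ha0 : a 0 = 1) (ha1 : a 1 = 1)
    (ha : ∀ n : ℕ, 2 ≤ n → a n = a (n - 1) + Polynomial.X *
      ∑ j ∈ Finset.Icc 2 (n - 1), ((n - 1).choose j : Polynomial ℚ) * a j * a (n - j))
    (hb0 : b 0 = 1)
    (hb : ∀ n : ℕ, b (n + 1) = b n +
      Polynomial.X * (∑ j ∈ Finset.Icc 1 n, (n.choose j : Polynomial ℚ) * b j * b (n - j)) +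
      Polynomial.X * (∑ j ∈ Finset.Icc 2 n,
        (n.choose j : Polynomial ℚ) * 2 ^ j * a j * b (n + 1 - j))) :
    ∀ n : ℕ, 1 ≤ n →
      (b n).eval 1 = 2 ^ n * (a n).eval 1 - n * (b (n - 1)).eval 1 := by
  have hF1 : (a 1).eval 1 = 1 := by rw [ha1]; simp
  have hFr : ∀ n : ℕ, 2 ≤ n → (a n).eval 1 = (a (n - 1)).eval 1 +
      ∑ j ∈ Finset.Icc 2 (n - 1), ((n - 1).choose j : ℚ) * (a j).eval 1 * (a (n - j)).eval 1 := by
    intro n hn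
    rw [ha n hn]
    simp [Polynomial.eval_finset_sum]
  have hG0 : (b 0).eval 1 = 1 := by rw [hb0]; simp
  have hGr : ∀ n : ℕ, (b (n + 1)).eval 1 = (b n).eval 1 +
      (∑ j ∈ Finset.Icc 1 n, (n.choose j : ℚ) * (b j).eval 1 * (b (n - j)).eval 1) +
      ∑ j ∈ Finset.Icc 2 n, (n.choose j : ℚ) * 2 ^ j * (a j).eval 1 * (b (n + 1 - j)).eval 1 := by
    intro n
    rw [hb n]
    simp [Polynomial.eval_finset_sum]
  have key := key_rat (fun n => (a n).eval 1) (fun n => (b n).eval 1) hF1 hFr hG0 hGr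
  intro n hn
  have h := key n hn
  linarith
end
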